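/- arXiv:1809.01352 — 6 statements merged into one kernel-verified Lean document; each statement's English description precedes it below -/
import Mathlib

section
/- Let r be a positive integer and let G be a hypergraph all of whose edges are nonempty sets of size at most r. Then for every subset A ⊆ V(G) with e(A) ≥ 2^{2r}, one has (1/6)·r·e(A)^{1/r} ≤ m(A) ≤ r·e(A). -/
/-!
The non-isolated vertices of `A` are exactly the union of the edges inside `A`, so
`m(A) ≤ r·e(A)`, and `e(A) ≤ 2^{m(A)}`; hence `e(A) ≥ 2^{2r}` forces `m(A) ≥ 2r`. In that range
`C(m, i)` increases in `i ≤ r`, so sorting the edges inside `A` by size gives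
`e(A) ≤ r·C(m, r) ≤ r·m^r / r! ≤ (6m/r)^r`, using `r ≤ 2^r` and `r^r ≤ 3^r·r!`
(the latter from `r^r / r! ≤ e^r`).
-/

open scoped Classical

/-- The number of edges of the hypergraph with edge collection `E` that are contained in `A`. -/
noncomputable def hyperEdgesIn {V : Type*} [DecidableEq V] (E : Finset (Finset V))
    (A : Finset V) : ℕ :=
  (E.filter (fun e => e ⊆ A)).card

/-- The number of vertices of `A` that are non-isolated in `A`, i.e. contained in some edge
`e ⊆ A` of the hypergraph. -/
noncomputable def hyperM {V : Type*} [DecidableEq V] (E : Finset (Finset V))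
    (A : Finset V) : ℕ :=
  (A.filter (fun v => ∃ e ∈ E, e ⊆ A ∧ v ∈ e)).card

open Finset Nat

theorem pow_le_three_pow_mul_factorial (n : ℕ) : (n : ℝ) ^ n ≤ 3 ^ n * n ! := by
  calc (n : ℝ) ^ n = (n : ℝ) ^ n / n ! * n ! := (div_mul_cancel₀ _ (by positivity)).symm
    _ ≤ Real.exp n * n ! := by
        gcongr
        exact Real.pow_div_factorial_le_exp _ n.cast_nonneg n
    _ ≤ 3 ^ n * n ! := by
        gcongr
        rw [← Real.exp_one_pow]
        gcongr
        exact Real.exp_one_lt_three.le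

theorem mul_choose_le_six_mul_div_pow (m r : ℕ) : (r : ℝ) * m.choose r ≤ (6 * m / r) ^ r := by
  rcases r.eq_zero_or_pos with rfl | hr
  · simp
  calc (r : ℝ) * m.choose r ≤ 2 ^ r * ((m : ℝ) ^ r / r !) := by
        gcongr
        · exact_mod_cast r.lt_two_pow_self.le
        · exact Nat.choose_le_pow_div r m
    _ ≤ 2 ^ r * ((m : ℝ) ^ r * 3 ^ r / r ^ r) := by
        refine mul_le_mul_of_nonneg_left ?_ (by positivity)
        rw [div_le_div_iff₀ (by positivity) (by positivity), mul_assoc]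
        gcongr
        exact pow_le_three_pow_mul_factorial r
    _ = (6 * m / r) ^ r := by
        rw [div_pow, mul_pow, show (6 : ℝ) ^ r = 2 ^ r * 3 ^ r by rw [← mul_pow]; norm_num]
        ring

theorem Nat.choose_le_choose_of_le_half {n a b : ℕ} (hab : a ≤ b) (hb : 2 * b ≤ n) :
    n.choose a ≤ n.choose b := by
  induction b, hab using Nat.le_induction with
  | base => rfl
  | succ b _ ih => exact (ih (by omega)).trans (Nat.choose_le_succ_of_lt_half_left (by omega))

theorem Finset.card_le_mul_choose_of_forall_subset {α : Type*} {S : Finset α}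
    {F : Finset (Finset α)} {r : ℕ} (hF : ∀ e ∈ F, e ⊆ S ∧ e.Nonempty ∧ #e ≤ r)
    (hr : 2 * r ≤ #S) : #F ≤ r * (#S).choose r := by
  have hcover : F ⊆ (Icc 1 r).biUnion (S.powersetCard ·) := by
    intro e he
    obtain ⟨heS, hne, hcard⟩ := hF e he
    simp only [mem_biUnion, mem_Icc, mem_powersetCard]
    exact ⟨#e, ⟨hne.card_pos, hcard⟩, heS, rfl⟩
  calc #F ≤ #(Icc 1 r) * (#S).choose r := by
        refine (card_le_card hcover).trans (card_biUnion_le_card_mul _ _ _ fun i hi => ?_)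
        rw [card_powersetCard]
        exact Nat.choose_le_choose_of_le_half (mem_Icc.mp hi).2 hr
    _ = r * (#S).choose r := by simp

section Hypergraph

variable {V : Type*} [DecidableEq V] (E : Finset (Finset V)) (A : Finset V)

theorem hyperM_eq_card_biUnion : hyperM E A = #((E.filter (· ⊆ A)).biUnion id) := by
  unfold hyperM
  congr 1
  ext v
  simp only [mem_filter, mem_biUnion, id]
  constructor
  · rintro ⟨-, e, heE, heA, hve⟩
    exact ⟨e, ⟨heE, heA⟩, hve⟩
  · rintro ⟨e, ⟨heE, heA⟩, hve⟩
    exact ⟨heA hve, e, heE, heA, hve⟩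

theorem hyperEdgesIn_le_two_pow_hyperM : hyperEdgesIn E A ≤ 2 ^ hyperM E A := by
  rw [hyperM_eq_card_biUnion, ← card_powerset]
  exact card_le_card fun e he => mem_powerset.mpr (subset_biUnion_of_mem id he)

theorem hyperM_le_mul_hyperEdgesIn {r : ℕ} (hE : ∀ e ∈ E, #e ≤ r) :
    hyperM E A ≤ r * hyperEdgesIn E A := by
  rw [hyperM_eq_card_biUnion, mul_comm]
  exact card_biUnion_le_card_mul _ _ _ fun e he => hE e (mem_filter.mp he).1

theorem hyperEdgesIn_le_mul_choose {r : ℕ} (hE : ∀ e ∈ E, e.Nonempty ∧ #e ≤ r)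
    (hr : 2 * r ≤ hyperM E A) : hyperEdgesIn E A ≤ r * (hyperM E A).choose r := by
  rw [hyperM_eq_card_biUnion] at hr ⊢
  exact card_le_mul_choose_of_forall_subset
    (fun e he => ⟨subset_biUnion_of_mem id he, hE e (mem_filter.mp he).1⟩) hr

end Hypergraph

/-- Theorem: let `r` be a positive integer and `G` a hypergraph all of whose edges are
nonempty sets of size at most `r`. Then for every subset `A ⊆ V(G)` with `e(A) ≥ 2^{2r}`,
one has `(1/6)·r·e(A)^{1/r} ≤ m(A) ≤ r·e(A)`. -/
theorem stmt_11 {V : Type*} [DecidableEq V] (r : ℕ) (hr : 1 ≤ r)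
    (E : Finset (Finset V)) (hE : ∀ e ∈ E, e.Nonempty ∧ e.card ≤ r)
    (A : Finset V) (hA : 2 ^ (2 * r) ≤ hyperEdgesIn E A) :
    (1 / 6 : ℝ) * (r : ℝ) * (hyperEdgesIn E A : ℝ) ^ ((1 : ℝ) / (r : ℝ)) ≤
        (hyperM E A : ℝ) ∧
      hyperM E A ≤ r * hyperEdgesIn E A := by
  have hm : 2 * r ≤ hyperM E A :=
    (Nat.pow_le_pow_iff_right (by norm_num)).mp (hA.trans (hyperEdgesIn_le_two_pow_hyperM E A))
  have hN : (hyperEdgesIn E A : ℝ) ≤ (6 * hyperM E A / r) ^ r :=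
    calc (hyperEdgesIn E A : ℝ) ≤ r * (hyperM E A).choose r := by
          exact_mod_cast hyperEdgesIn_le_mul_choose E A hE hm
      _ ≤ _ := mul_choose_le_six_mul_div_pow _ _
  have hr' : (0 : ℝ) < r := by exact_mod_cast hr
  have hroot : (hyperEdgesIn E A : ℝ) ^ ((1 : ℝ) / r) ≤ 6 * hyperM E A / r := by
    rw [one_div, Real.rpow_inv_le_iff_of_pos (by positivity) (by positivity) hr',
      Real.rpow_natCast]
    exact hN
  refine ⟨?_, hyperM_le_mul_hyperEdgesIn E A fun e he => (hE e he).2⟩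
  calc (1 / 6 : ℝ) * r * (hyperEdgesIn E A : ℝ) ^ ((1 : ℝ) / r)
      ≤ 1 / 6 * r * (6 * hyperM E A / r) := by gcongr
    _ = hyperM E A := by field_simp
end

section
/- Let r, k and ℓ be positive integers, let G be a hypergraph on n ≥ k vertices all of whose edges are nonempty sets of size at most r, and let ε be a real number with 0 < ε < 1/2. Let B ⊆ V(G) be a subset of size |B| ≤ k and set a = k − |B|. Then the number of sets A ⊆ V(G) such that (A,B) is an ε-pleasant pair is at most 2·r^{1/4}·ε^{-1/2}·k^{-1/4}·n^a/a!. -/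
open scoped Classical

/-- `h(A,B)`: the number of vertices `v ∈ A \ B` that are connected to `B`, i.e. such that
there is an edge `e` with `v ∈ e` and `e \ {v} ⊆ B`. -/
noncomputable def hyperH {V : Type*} [DecidableEq V] (E : Finset (Finset V))
    (A B : Finset V) : ℕ :=
  ((A \ B).filter (fun v => ∃ e ∈ E, v ∈ e ∧ e \ {v} ⊆ B)).card

/-- `m(A,B)`: the number of vertices `v ∈ A \ B` that are non-isolated in `A`. -/
noncomputable def hyperMAB {V : Type*} [DecidableEq V] (E : Finset (Finset V))
    (A B : Finset V) : ℕ :=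
  ((A \ B).filter (fun v => ∃ e ∈ E, e ⊆ A ∧ v ∈ e)).card

/-- `f(A,B) = m(A,B) - h(A,B)`: the number of vertices `v ∈ A \ B` that are non-isolated
in `A` but not connected to `B`. -/
noncomputable def hyperF {V : Type*} [DecidableEq V] (E : Finset (Finset V))
    (A B : Finset V) : ℕ :=
  hyperMAB E A B - hyperH E A B

/-- A pair `(A,B)` with `B ⊆ A ⊆ V(G)` is `ε`-pleasant if (i) `|A| = k` and `e(A) = ℓ`,
(ii) `f(A,B) = 0`, (iii) `h(A,B) ≥ (1/4)·r^{-1/2}·ε·√k`, and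
(iv) `|A \ B| - h(A,B) ≥ (1/4)·r^{-1/2}·ε·√k`. -/
def Pleasant {V : Type*} [DecidableEq V] (E : Finset (Finset V)) (r k ℓ : ℕ) (ε : ℝ)
    (A B : Finset V) : Prop :=
  B ⊆ A ∧ A.card = k ∧ hyperEdgesIn E A = ℓ ∧ hyperF E A B = 0 ∧
    (1 / 4 : ℝ) * (Real.sqrt r)⁻¹ * ε * Real.sqrt k ≤ (hyperH E A B : ℝ) ∧
    (1 / 4 : ℝ) * (Real.sqrt r)⁻¹ * ε * Real.sqrt k ≤
      ((A \ B).card : ℝ) - (hyperH E A B : ℝ)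

/-!
If `(A, B)` is pleasant, `f(A,B) = 0` forces every edge inside `A` to lie in `B ∪ S(A)`, where
`S(A)` is the set of vertices of `A \ B` connected to `B`; so `e(B ∪ S(A)) = ℓ`. Since adding a
vertex connected to `B` adds an edge, the sets `S(A)` form an antichain in the set `W` of all
vertices connected to `B`. Once `S(A) = S` is fixed, the rest of `A \ B` is an `(a - |S|)`-subset of
`V \ (B ∪ W)`. Both `|S|` and `a - |S|` are at least `c = ε √k / (4 √r)`, and Stirling's formula
with weighted AM-GM gives `C(|W|, s) · C(n - |B ∪ W|, a - s) ≤ c^{-1/2} n^a / a!` in that range;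
the LYM inequality for the antichain then sums these bounds to the claim.
-/

open Finset Real

lemma factorial_le_exp_one_mul_sqrt_mul_pow {n : ℕ} (hn : n ≠ 0) :
    (n.factorial : ℝ) ≤ exp 1 * √n * (n / exp 1) ^ n := by
  have hseq : Stirling.stirlingSeq n ≤ exp 1 / √2 := by
    obtain ⟨m, rfl⟩ := Nat.exists_eq_add_of_le (Nat.one_le_iff_ne_zero.2 hn)
    simpa [Function.comp, Nat.add_comm] using Stirling.stirlingSeq'_antitone (Nat.zero_le m)
  rw [Stirling.stirlingSeq, div_le_div_iff₀ (by positivity) (by positivity),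
    sqrt_mul zero_le_two] at hseq
  have h2 : (0 : ℝ) < √2 := by positivity
  nlinarith

lemma pow_mul_pow_mul_add_pow_le {x y : ℝ} (hx : 0 ≤ x) (hy : 0 ≤ y) {s t : ℕ} (hs : 0 < s)
    (ht : 0 < t) :
    x ^ s * y ^ t * ((s : ℝ) + t) ^ (s + t) ≤ (s : ℝ) ^ s * (t : ℝ) ^ t * (x + y) ^ (s + t) := by
  have hS : (0 : ℝ) < s := by exact_mod_cast hs
  have hT : (0 : ℝ) < t := by exact_mod_cast ht
  set m : ℝ := s + t
  have hm : 0 < m := by positivity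
  set p := m * x / s
  set q := m * y / t
  have hamgm := geom_mean_le_arith_mean2_weighted (w₁ := s / m) (w₂ := t / m) (p₁ := p)
    (p₂ := q) (by positivity) (by positivity) (by positivity) (by positivity)
    (by field_simp; simp [m])
  have hsum : s / m * p + t / m * q = x + y := by simp only [p, q]; field_simp
  rw [hsum] at hamgm
  have hpow := pow_le_pow_left₀ (by positivity) hamgm (s + t)
  have hlhs : (p ^ (s / m) * q ^ (t / m)) ^ (s + t) = p ^ s * q ^ t := by
    rw [mul_pow, ← rpow_natCast, ← rpow_natCast (q ^ _), ← rpow_mul (by positivity),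
      ← rpow_mul (by positivity)]
    have hs' : s / m * ((s + t : ℕ) : ℝ) = s := by push_cast; field_simp; simp [m]
    have ht' : t / m * ((s + t : ℕ) : ℝ) = t := by push_cast; field_simp; simp [m]
    rw [hs', ht', rpow_natCast, rpow_natCast]
  rw [hlhs] at hpow
  have hpq : p ^ s * q ^ t * ((s : ℝ) ^ s * (t : ℝ) ^ t) = x ^ s * y ^ t * m ^ (s + t) := by
    simp only [p, q, div_pow, mul_pow, pow_add]
    field_simp
  rw [← hpq]
  exact mul_le_mul_of_nonneg_right hpow (by positivity) |>.trans_eq (by ring)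

lemma factorial_add_mul_pow_mul_pow_mul_sqrt_le {c : ℝ} {s t : ℕ} (hc : 0 < c) (hcs : c ≤ s)
    (hct : c ≤ t) :
    ((s + t).factorial : ℝ) * s ^ s * t ^ t * √c ≤
      ((s : ℝ) + t) ^ (s + t) * s.factorial * t.factorial := by
  have hs : (0 : ℝ) < s := hc.trans_le hcs
  have ht : (0 : ℝ) < t := hc.trans_le hct
  have hupper := factorial_le_exp_one_mul_sqrt_mul_pow (n := s + t)
    (Nat.add_pos_left (by exact_mod_cast hs) t).ne'
  have hlower_s := Stirling.le_factorial_stirling s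
  have hlower_t := Stirling.le_factorial_stirling t
  push_cast at hupper
  -- `c (s + t) ≤ 2 s t` and `e < π` give `e √(c (s + t)) ≤ 2π √(s t)`
  have hscalar : exp 1 * √((s + t) * c) ≤ √(2 * π * s) * √(2 * π * t) := by
    rw [← sqrt_mul (by positivity), ← sqrt_sq (exp_pos 1).le, ← sqrt_mul (by positivity)]
    apply sqrt_le_sqrt
    have he : exp 1 ^ 2 ≤ 2 * π ^ 2 := by
      have : exp 1 < π := by linarith [exp_one_lt_d9, pi_gt_d6]
      nlinarith [exp_pos 1]
    have hst : (s + t) * c ≤ 2 * s * t := by nlinarith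
    nlinarith [mul_le_mul he hst (by positivity) (by positivity), pi_pos]
  set K : ℝ := ((s : ℝ) + t) ^ (s + t) * s ^ s * t ^ t / exp 1 ^ (s + t)
  calc ((s + t).factorial : ℝ) * s ^ s * t ^ t * √c
      ≤ exp 1 * √((s : ℝ) + t) * (((s : ℝ) + t) / exp 1) ^ (s + t) * s ^ s * t ^ t * √c := by
        gcongr
    _ = exp 1 * √((s + t) * c) * K := by
        rw [sqrt_mul (by positivity), div_pow]; ring
    _ ≤ √(2 * π * s) * √(2 * π * t) * K := by gcongr
    _ = ((s : ℝ) + t) ^ (s + t) * (√(2 * π * s) * (s / exp 1) ^ s) *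
          (√(2 * π * t) * (t / exp 1) ^ t) := by
        simp only [K, div_pow, pow_add]; field_simp
    _ ≤ ((s : ℝ) + t) ^ (s + t) * s.factorial * t.factorial := by gcongr

lemma choose_mul_choose_mul_factorial_mul_sqrt_le {c : ℝ} {s t : ℕ} (hc : 0 < c) (hcs : c ≤ s)
    (hct : c ≤ t) (w u : ℕ) :
    (w.choose s : ℝ) * u.choose t * (s + t).factorial * √c ≤ ((w : ℝ) + u) ^ (s + t) := by
  have hs : 0 < s := by exact_mod_cast hc.trans_le hcs
  have ht : 0 < t := by exact_mod_cast hc.trans_le hct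
  have hdesc (n k : ℕ) : (k.factorial * n.choose k : ℝ) ≤ (n : ℝ) ^ k := by
    exact_mod_cast (Nat.descFactorial_eq_factorial_mul_choose n k).symm.trans_le
      (Nat.descFactorial_le_pow n k)
  refine le_of_mul_le_mul_right ?_ (by positivity : (0 : ℝ) < (s : ℝ) ^ s * (t : ℝ) ^ t)
  calc (w.choose s : ℝ) * u.choose t * (s + t).factorial * √c * (s ^ s * t ^ t)
      = w.choose s * u.choose t * ((s + t).factorial * s ^ s * t ^ t * √c) := by ring
    _ ≤ w.choose s * u.choose t * (((s : ℝ) + t) ^ (s + t) * s.factorial * t.factorial) := by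
        exact mul_le_mul_of_nonneg_left (factorial_add_mul_pow_mul_pow_mul_sqrt_le hc hcs hct)
          (by positivity)
    _ = (s.factorial * w.choose s) * (t.factorial * u.choose t) * ((s : ℝ) + t) ^ (s + t) := by
        ring
    _ ≤ (w : ℝ) ^ s * (u : ℝ) ^ t * ((s : ℝ) + t) ^ (s + t) := by
        gcongr <;> apply hdesc
    _ ≤ s ^ s * t ^ t * ((w : ℝ) + u) ^ (s + t) :=
        pow_mul_pow_mul_add_pow_le (by positivity) (by positivity) hs ht
    _ = ((w : ℝ) + u) ^ (s + t) * (s ^ s * t ^ t) := by ring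

lemma sum_inv_choose_card_le_one_of_subset {α : Type*} [DecidableEq α] {W : Finset α}
    {𝒮 : Finset (Finset α)} (h𝒮 : IsAntichain (· ⊆ ·) (𝒮 : Set (Finset α)))
    (hW : ∀ S ∈ 𝒮, S ⊆ W) :
    ∑ S ∈ 𝒮, ((#W).choose #S : ℝ)⁻¹ ≤ 1 := by
  have hmap (S : Finset α) (hS : S ∈ 𝒮) :
      (S.subtype (· ∈ W)).map (Function.Embedding.subtype _) = S :=
    subtype_map_of_mem fun _ hx => hW S hS hx
  have hinj : Set.InjOn (Finset.subtype (· ∈ W)) 𝒮 := fun S₁ hS₁ S₂ hS₂ h => by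
    rw [← hmap S₁ hS₁, ← hmap S₂ hS₂, h]
  have hanti :
      IsAntichain (· ⊆ ·) (↑(𝒮.image (Finset.subtype (· ∈ W))) : Set (Finset W)) := by
    rw [coe_image]
    rintro _ ⟨S₁, hS₁, rfl⟩ _ ⟨S₂, hS₂, rfl⟩ hne hsub
    refine h𝒮 hS₁ hS₂ (fun h => hne (h ▸ rfl)) ?_
    rw [← hmap S₁ hS₁, ← hmap S₂ hS₂]
    exact map_subset_map.2 hsub
  calc ∑ S ∈ 𝒮, ((#W).choose #S : ℝ)⁻¹
      = ∑ S ∈ 𝒮.image (Finset.subtype (· ∈ W)), ((Fintype.card W).choose #S : ℝ)⁻¹ := by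
        rw [sum_image hinj, Fintype.card_coe]
        refine sum_congr rfl fun S hS => ?_
        rw [← card_map (Function.Embedding.subtype _), hmap S hS]
    _ ≤ 1 := lubell_yamamoto_meshalkin_inequality_sum_inv_choose hanti

section Hypergraph

variable {V : Type*} [DecidableEq V] (E : Finset (Finset V))

/-- `hyperH E A B` is, by definition, the cardinality of this set. -/
noncomputable def connectedPart (A B : Finset V) : Finset V :=
  (A \ B).filter fun v => ∃ e ∈ E, v ∈ e ∧ e \ {v} ⊆ B

variable {E} {A A' B S : Finset V}

lemma connectedPart_subset_sdiff : connectedPart E A B ⊆ A \ B := filter_subset _ _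

lemma connectedPart_mono (h : A ⊆ A') : connectedPart E A B ⊆ connectedPart E A' B :=
  filter_subset_filter _ (sdiff_subset_sdiff h subset_rfl)

lemma filter_nonisolated_eq_connectedPart (hBA : B ⊆ A) (hf : hyperF E A B = 0) :
    (A \ B).filter (fun v => ∃ e ∈ E, e ⊆ A ∧ v ∈ e) = connectedPart E A B := by
  refine (eq_of_subset_of_card_le ?_ (Nat.sub_eq_zero_iff_le.1 hf)).symm
  intro v hv
  obtain ⟨hvAB, e, he, hve, heB⟩ := mem_filter.1 hv
  refine mem_filter.2 ⟨hvAB, e, he, fun x hx => ?_, hve⟩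
  by_cases hxv : x = v
  · exact hxv ▸ (mem_sdiff.1 hvAB).1
  · exact hBA (heB (mem_sdiff.2 ⟨hx, by simpa using hxv⟩))

lemma hyperEdgesIn_union_connectedPart (hBA : B ⊆ A) (hf : hyperF E A B = 0) :
    hyperEdgesIn E (B ∪ connectedPart E A B) = hyperEdgesIn E A := by
  unfold hyperEdgesIn
  congr 1
  refine filter_congr fun e _ => ⟨fun he => he.trans ?_, fun he x hx => ?_⟩
  · exact union_subset hBA (connectedPart_subset_sdiff.trans sdiff_subset)
  · by_cases hxB : x ∈ B
    · exact mem_union_left _ hxB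
    · rw [mem_union, ← filter_nonisolated_eq_connectedPart hBA hf]
      exact Or.inr (mem_filter.2 ⟨mem_sdiff.2 ⟨he hx, hxB⟩, e, ‹_›, he, hx⟩)

-- A vertex of `connectedPart E A B` outside `S` brings in an edge contained in `B` plus it.
lemma hyperEdgesIn_lt_of_ssubset_connectedPart (h : S ⊂ connectedPart E A B) :
    hyperEdgesIn E (B ∪ S) < hyperEdgesIn E (B ∪ connectedPart E A B) := by
  obtain ⟨v, hv, hvS⟩ := exists_of_ssubset h
  obtain ⟨hvAB, e, he, hve, heB⟩ := mem_filter.1 hv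
  have heB' : e ⊆ B ∪ connectedPart E A B := fun x hx => by
    by_cases hxv : x = v
    · exact mem_union_right _ (hxv ▸ hv)
    · exact mem_union_left _ (heB (mem_sdiff.2 ⟨hx, by simpa using hxv⟩))
  refine card_lt_card ((ssubset_iff_of_subset ?_).2 ⟨e, mem_filter.2 ⟨he, heB'⟩, ?_⟩)
  · exact fun e he' => mem_filter.2
      ⟨(mem_filter.1 he').1, (mem_filter.1 he').2.trans (union_subset_union_right h.subset)⟩
  · intro he'
    rcases mem_union.1 ((mem_filter.1 he').2 hve) with hvB | hvS'
    · exact (mem_sdiff.1 hvAB).2 hvB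
    · exact hvS hvS'

lemma isAntichain_connectedPart (ℓ : ℕ) :
    IsAntichain (· ⊆ ·)
      ((connectedPart E · B) '' {A | B ⊆ A ∧ hyperF E A B = 0 ∧ hyperEdgesIn E A = ℓ}) := by
  rintro _ ⟨A₁, ⟨hBA₁, hf₁, hℓ₁⟩, rfl⟩ _ ⟨A₂, ⟨hBA₂, hf₂, hℓ₂⟩, rfl⟩ hne hsub
  have := hyperEdgesIn_lt_of_ssubset_connectedPart (hsub.ssubset_of_ne hne)
  rw [hyperEdgesIn_union_connectedPart hBA₁ hf₁, hyperEdgesIn_union_connectedPart hBA₂ hf₂,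
    hℓ₁, hℓ₂] at this
  exact lt_irrefl ℓ this

end Hypergraph

section Counting

variable {V : Type*} [DecidableEq V] [Fintype V] {E : Finset (Finset V)} {A B : Finset V}

lemma mem_image_union_powersetCard (hBA : B ⊆ A) :
    A ∈ ((univ \ (B ∪ connectedPart E univ B)).powersetCard
      (#(A \ B) - #(connectedPart E A B))).image (B ∪ connectedPart E A B ∪ ·) := by
  refine mem_image.2 ⟨(A \ B) \ connectedPart E A B, mem_powersetCard.2 ⟨fun x hx => ?_,
    card_sdiff_of_subset connectedPart_subset_sdiff⟩, ?_⟩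
  · simp only [connectedPart, mem_sdiff, mem_filter, mem_union, mem_univ, true_and] at hx ⊢
    exact fun h => h.elim hx.1.2 fun h' => hx.2 ⟨hx.1, h'.2⟩
  · rw [union_assoc, union_sdiff_of_subset connectedPart_subset_sdiff,
      union_sdiff_of_subset hBA]

theorem card_le_inv_sqrt_mul_pow_div_factorial {𝒜 : Finset (Finset V)} {a ℓ : ℕ} {c : ℝ}
    (hc : 0 < c) (hBA : ∀ A ∈ 𝒜, B ⊆ A) (ha : ∀ A ∈ 𝒜, #(A \ B) = a)
    (hf : ∀ A ∈ 𝒜, hyperF E A B = 0) (hℓ : ∀ A ∈ 𝒜, hyperEdgesIn E A = ℓ)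
    (hh : ∀ A ∈ 𝒜, c ≤ hyperH E A B) (hh' : ∀ A ∈ 𝒜, c ≤ (a : ℝ) - hyperH E A B) :
    (#𝒜 : ℝ) ≤ (√c)⁻¹ * Fintype.card V ^ a / a.factorial := by
  set W := connectedPart E univ B
  set R := univ \ (B ∪ W)
  set 𝒮 := 𝒜.image (connectedPart E · B)
  set M := (√c)⁻¹ * Fintype.card V ^ a / a.factorial
  have hcover : 𝒜 ⊆ 𝒮.biUnion fun S => (R.powersetCard (a - #S)).image (B ∪ S ∪ ·) := by
    intro A hA
    refine mem_biUnion.2 ⟨_, mem_image_of_mem _ hA, ?_⟩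
    rw [← ha A hA]
    exact mem_image_union_powersetCard (hBA A hA)
  have hanti : IsAntichain (· ⊆ ·) (𝒮 : Set (Finset V)) := by
    refine (isAntichain_connectedPart (E := E) (B := B) ℓ).subset ?_
    rw [coe_image]
    exact Set.image_mono fun A hA => ⟨hBA A hA, hf A hA, hℓ A hA⟩
  have hW : ∀ S ∈ 𝒮, S ⊆ W := by
    simp only [𝒮, mem_image]
    rintro _ ⟨A, -, rfl⟩
    exact connectedPart_mono (subset_univ A)
  have hWR : #W + #R ≤ Fintype.card V := by
    have := card_le_card (subset_union_right (s₁ := B) (s₂ := W))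
    have := card_le_univ (B ∪ W)
    rw [card_sdiff_of_subset (subset_univ _), card_univ]
    omega
  have hbound : ∀ S ∈ 𝒮, ((#W).choose #S : ℝ) * (#R).choose (a - #S) ≤ M := by
    simp only [𝒮, mem_image]
    rintro _ ⟨A, hA, rfl⟩
    have hsa : #(connectedPart E A B) ≤ a := ha A hA ▸ card_le_card connectedPart_subset_sdiff
    have hs : c ≤ #(connectedPart E A B) := hh A hA
    have ht : c ≤ (a - #(connectedPart E A B) : ℕ) := by rw [Nat.cast_sub hsa]; exact hh' A hA
    have key := choose_mul_choose_mul_factorial_mul_sqrt_le hc hs ht #W #R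
    rw [Nat.add_sub_cancel' hsa] at key
    rw [le_div_iff₀ (by positivity), inv_mul_eq_div, le_div_iff₀ (by positivity)]
    exact key.trans (pow_le_pow_left₀ (by positivity) (by exact_mod_cast hWR) a)
  calc (#𝒜 : ℝ)
      ≤ ∑ S ∈ 𝒮, ((#R).choose (a - #S) : ℝ) := by
        norm_cast
        refine (card_le_card hcover).trans (card_biUnion_le.trans (sum_le_sum fun S _ => ?_))
        exact card_image_le.trans (card_powersetCard _ _).le
    _ ≤ ∑ S ∈ 𝒮, ((#W).choose #S : ℝ)⁻¹ * M := by
        refine sum_le_sum fun S hS => (le_inv_mul_iff₀ ?_).2 (hbound S hS)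
        exact_mod_cast Nat.choose_pos (card_le_card (hW S hS))
    _ ≤ M := by
        rw [← sum_mul]
        exact mul_le_of_le_one_left (by positivity) (sum_inv_choose_card_le_one_of_subset hanti hW)

end Counting

lemma inv_sqrt_threshold_eq_rpow {r ε k : ℝ} (hr : 0 ≤ r) (hε : 0 ≤ ε)
    (hk : 0 ≤ k) :
    (√(1 / 4 * (√r)⁻¹ * ε * √k))⁻¹ =
      2 * r ^ ((1 : ℝ) / 4) * ε ^ (-(1 / 2 : ℝ)) * k ^ (-(1 / 4 : ℝ)) := by
  have hsqrt_sqrt {x : ℝ} (hx : 0 ≤ x) : √(√x) = x ^ ((1 : ℝ) / 4) := by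
    rw [sqrt_eq_rpow, sqrt_eq_rpow, ← rpow_mul hx]
    norm_num
  have hquarter : √(1 / 4 : ℝ) = 1 / 2 := by
    rw [show (1 / 4 : ℝ) = (1 / 2) ^ 2 by norm_num, sqrt_sq (by norm_num)]
  rw [sqrt_mul' _ (sqrt_nonneg k), sqrt_mul' _ hε, sqrt_mul (by norm_num), sqrt_inv,
    hsqrt_sqrt hr, hsqrt_sqrt hk, hquarter, rpow_neg hε, rpow_neg hk, ← sqrt_eq_rpow]
  simp only [mul_inv, inv_inv]
  norm_num

theorem stmt_12_general (r k ℓ n : ℕ) (hr : 1 ≤ r) (hk : 1 ≤ k)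
    (E : Finset (Finset (Fin n)))
    (ε : ℝ) (hε0 : 0 < ε)
    (B : Finset (Fin n)) :
    ({A : Finset (Fin n) | Pleasant E r k ℓ ε A B}.ncard : ℝ) ≤
      2 * (r : ℝ) ^ ((1 : ℝ) / 4) * ε ^ (-(1 / 2 : ℝ)) * (k : ℝ) ^ (-(1 / 4 : ℝ)) *
        (n : ℝ) ^ (k - B.card) / ((k - B.card).factorial : ℝ) := by
  set 𝒜 := univ.filter fun A => Pleasant E r k ℓ ε A B
  have hP {A} (hA : A ∈ 𝒜) : Pleasant E r k ℓ ε A B := (mem_filter.1 hA).2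
  have ha {A} (hA : A ∈ 𝒜) : #(A \ B) = k - #B := by
    rw [card_sdiff_of_subset (hP hA).1, (hP hA).2.1]
  have hc : 0 < (1 / 4 : ℝ) * (√r)⁻¹ * ε * √k := by
    have : (0 : ℝ) < r := by exact_mod_cast hr
    have : (0 : ℝ) < k := by exact_mod_cast hk
    positivity
  have hcount := card_le_inv_sqrt_mul_pow_div_factorial hc (fun A hA => (hP hA).1)
    (fun A hA => ha hA) (fun A hA => (hP hA).2.2.2.1) (fun A hA => (hP hA).2.2.1)
    (fun A hA => (hP hA).2.2.2.2.1) (fun A hA => ha hA ▸ (hP hA).2.2.2.2.2)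
  rw [inv_sqrt_threshold_eq_rpow (Nat.cast_nonneg r) hε0.le (Nat.cast_nonneg k),
    Fintype.card_fin] at hcount
  rwa [← coe_filter_univ, Set.ncard_coe_finset]

/-- Theorem: let `r`, `k`, `ℓ` be positive integers, `G` a hypergraph on `n ≥ k` vertices all
of whose edges are nonempty sets of size at most `r`, and `ε` a real with `0 < ε < 1/2`.
Let `B ⊆ V(G)` with `|B| ≤ k` and `a = k - |B|`. Then the number of sets `A ⊆ V(G)` such that
`(A,B)` is an `ε`-pleasant pair is at most `2·r^{1/4}·ε^{-1/2}·k^{-1/4}·n^a/a!`. -/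
theorem stmt_12 (r k ℓ n : ℕ) (hr : 1 ≤ r) (hk : 1 ≤ k) (hℓ : 1 ≤ ℓ) (hn : k ≤ n)
    (E : Finset (Finset (Fin n))) (hE : ∀ e ∈ E, e.Nonempty ∧ e.card ≤ r)
    (ε : ℝ) (hε0 : 0 < ε) (hε1 : ε < 1 / 2)
    (B : Finset (Fin n)) (hB : B.card ≤ k) :
    ({A : Finset (Fin n) | Pleasant E r k ℓ ε A B}.ncard : ℝ) ≤
      2 * (r : ℝ) ^ ((1 : ℝ) / 4) * ε ^ (-(1 / 2 : ℝ)) * (k : ℝ) ^ (-(1 / 4 : ℝ)) *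
        (n : ℝ) ^ (k - B.card) / ((k - B.card).factorial : ℝ) :=
  stmt_12_general r k ℓ n hr hk E ε hε0 B
end

section
/- Let r, k and ℓ be positive integers, let ε be a real number with 0 < ε < 1/2 and ε²·k ≥ 2^{12}·r, and let G be a hypergraph on n ≥ k vertices all of whose edges are nonempty sets of size at most r. Set p = 1 − (1/2)·r^{-1/2}·k^{-1/2}. Then for every k-element subset A ⊆ V(G) with e(A) = ℓ and ε·k ≤ m(A) ≤ (1−ε)·k the following holds: if a random subset B ⊆ A is chosen by including each element of A independently with probability p, then with probability at least 1/2 the pair (A,B) is ε-pleasant. -/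
open scoped Classical

section HelperAux
variable {V : Type*} [DecidableEq V]

lemma key_prob (A S T : Finset V) (p : ℝ) (hS : S ⊆ A) (hT : T ⊆ A) (hST : Disjoint S T) :
    ∑ B ∈ A.powerset,
      (if S ⊆ B ∧ Disjoint T B then p ^ B.card * (1 - p) ^ (A.card - B.card) else 0)
      = p ^ S.card * (1 - p) ^ T.card := by
  have h := Finset.prod_add (fun i => if i ∈ T then (0:ℝ) else p)
      (fun i => if i ∈ S then (0:ℝ) else (1-p)) A
  have hL : ∏ i ∈ A, ((if i ∈ T then (0:ℝ) else p) + (if i ∈ S then (0:ℝ) else (1-p)))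
      = p ^ S.card * (1 - p) ^ T.card := by
    have hUA : S ∪ T ⊆ A := Finset.union_subset hS hT
    rw [← Finset.prod_sdiff hUA, Finset.prod_union hST]
    have h1 : ∏ i ∈ A \ (S ∪ T), ((if i ∈ T then (0:ℝ) else p) + (if i ∈ S then (0:ℝ) else (1-p))) = 1 := by
      apply Finset.prod_eq_one
      intro i hi
      rw [Finset.mem_sdiff, Finset.mem_union] at hi
      push_neg at hi
      rw [if_neg hi.2.2, if_neg hi.2.1]; ring
    have h2 : ∏ i ∈ S, ((if i ∈ T then (0:ℝ) else p) + (if i ∈ S then (0:ℝ) else (1-p))) = p ^ S.card := by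
      rw [← Finset.prod_const]
      apply Finset.prod_congr rfl
      intro i hi
      rw [if_neg (Finset.disjoint_left.mp hST hi), if_pos hi]; ring
    have h3 : ∏ i ∈ T, ((if i ∈ T then (0:ℝ) else p) + (if i ∈ S then (0:ℝ) else (1-p))) = (1-p) ^ T.card := by
      rw [← Finset.prod_const]
      apply Finset.prod_congr rfl
      intro i hi
      rw [if_pos hi, if_neg (Finset.disjoint_right.mp hST hi)]; ring
    rw [h1, h2, h3]; ring
  rw [hL] at h
  rw [h]
  apply Finset.sum_congr rfl
  intro B hB
  rw [Finset.mem_powerset] at hB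
  by_cases hd : Disjoint T B
  · have hfB : ∏ i ∈ B, (if i ∈ T then (0:ℝ) else p) = p ^ B.card := by
      rw [← Finset.prod_const]
      exact Finset.prod_congr rfl fun i hi => if_neg (Finset.disjoint_right.mp hd hi)
    by_cases hs : S ⊆ B
    · rw [if_pos ⟨hs, hd⟩, hfB]
      have hgB : ∏ i ∈ A \ B, (if i ∈ S then (0:ℝ) else (1-p)) = (1-p) ^ (A.card - B.card) := by
        rw [← Finset.card_sdiff_of_subset hB, ← Finset.prod_const]
        apply Finset.prod_congr rfl
        intro i hi
        rw [Finset.mem_sdiff] at hi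
        exact if_neg (fun hiS => hi.2 (hs hiS))
      rw [hgB]
    · rw [if_neg (by tauto)]
      obtain ⟨v, hvS, hvB⟩ := Finset.not_subset.mp hs
      have : ∏ i ∈ A \ B, (if i ∈ S then (0:ℝ) else (1-p)) = 0 :=
        Finset.prod_eq_zero (Finset.mem_sdiff.mpr ⟨hS hvS, hvB⟩) (if_pos hvS)
      rw [this, mul_zero]
  · rw [if_neg (by tauto)]
    obtain ⟨v, hvT, hvB⟩ := Finset.not_disjoint_iff.mp hd
    have : ∏ i ∈ B, (if i ∈ T then (0:ℝ) else p) = 0 :=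
      Finset.prod_eq_zero hvB (if_pos hvT)
    rw [this, zero_mul]

lemma sum_W (A : Finset V) (p : ℝ) :
    ∑ B ∈ A.powerset, p ^ B.card * (1 - p) ^ (A.card - B.card) = 1 := by
  have h := key_prob A ∅ ∅ p (Finset.empty_subset _) (Finset.empty_subset _) (by simp)
  simpa using h

lemma single_prob (A : Finset V) (p : ℝ) {v : V} (hv : v ∈ A) :
    ∑ B ∈ A.powerset, (if v ∉ B then p ^ B.card * (1 - p) ^ (A.card - B.card) else 0) = 1 - p := by
  have h := key_prob A ∅ {v} p (Finset.empty_subset _) (by simpa using hv) (by simp)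
  simpa [Finset.disjoint_singleton_left] using h

lemma pair_prob (A : Finset V) (p : ℝ) {v u : V} (hv : v ∈ A) (hu : u ∈ A) (hvu : v ≠ u) :
    ∑ B ∈ A.powerset, (if v ∉ B ∧ u ∉ B then p ^ B.card * (1 - p) ^ (A.card - B.card) else 0)
      = (1 - p) ^ 2 := by
  have h := key_prob A ∅ {v, u} p (Finset.empty_subset _)
      (by intro x hx; simp at hx; rcases hx with rfl | rfl <;> assumption) (by simp)
  have hc : ({v, u} : Finset V).card = 2 := Finset.card_pair hvu
  rw [hc] at h
  simpa [Finset.disjoint_insert_left, Finset.disjoint_singleton_left] using h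


lemma W_nonneg {p : ℝ} (hp0 : 0 ≤ p) (hp1 : p ≤ 1) (a b : ℕ) :
    (0:ℝ) ≤ p ^ a * (1 - p) ^ b :=
  mul_nonneg (pow_nonneg hp0 _) (pow_nonneg (by linarith) _)

lemma moment1 (A S : Finset V) (hS : S ⊆ A) (p : ℝ) :
    ∑ B ∈ A.powerset, (p ^ B.card * (1 - p) ^ (A.card - B.card)) *
        ((S.filter (fun v => v ∉ B)).card : ℝ)
      = (S.card : ℝ) * (1 - p) := by
  have hX : ∀ B : Finset V, ((S.filter (fun v => v ∉ B)).card : ℝ)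
      = ∑ v ∈ S, (if v ∉ B then (1:ℝ) else 0) := by
    intro B
    rw [Finset.card_filter]
    push_cast
    rfl
  calc ∑ B ∈ A.powerset, (p ^ B.card * (1 - p) ^ (A.card - B.card)) *
        ((S.filter (fun v => v ∉ B)).card : ℝ)
      = ∑ B ∈ A.powerset, ∑ v ∈ S,
          (if v ∉ B then p ^ B.card * (1 - p) ^ (A.card - B.card) else 0) := by
        apply Finset.sum_congr rfl
        intro B _
        rw [hX, Finset.mul_sum]
        apply Finset.sum_congr rfl
        intro v _
        by_cases h : v ∉ B <;> simp [h]
    _ = ∑ v ∈ S, ∑ B ∈ A.powerset,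
          (if v ∉ B then p ^ B.card * (1 - p) ^ (A.card - B.card) else 0) := Finset.sum_comm
    _ = ∑ v ∈ S, (1 - p) := Finset.sum_congr rfl fun v hv => single_prob A p (hS hv)
    _ = (S.card : ℝ) * (1 - p) := by rw [Finset.sum_const, nsmul_eq_mul]

lemma moment2 (A S : Finset V) (hS : S ⊆ A) (p : ℝ) :
    ∑ B ∈ A.powerset, (p ^ B.card * (1 - p) ^ (A.card - B.card)) *
        ((S.filter (fun v => v ∉ B)).card : ℝ) ^ 2
      = (S.card : ℝ) * (1 - p) + ((S.card : ℝ) ^ 2 - (S.card : ℝ)) * (1 - p) ^ 2 := by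
  have hX : ∀ B : Finset V, ((S.filter (fun v => v ∉ B)).card : ℝ)
      = ∑ v ∈ S, (if v ∉ B then (1:ℝ) else 0) := by
    intro B
    rw [Finset.card_filter]
    push_cast
    rfl
  calc ∑ B ∈ A.powerset, (p ^ B.card * (1 - p) ^ (A.card - B.card)) *
        ((S.filter (fun v => v ∉ B)).card : ℝ) ^ 2
      = ∑ B ∈ A.powerset, ∑ v ∈ S, ∑ u ∈ S,
          (if v ∉ B ∧ u ∉ B then p ^ B.card * (1 - p) ^ (A.card - B.card) else 0) := by
        apply Finset.sum_congr rfl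
        intro B _
        rw [hX, sq, Finset.sum_mul_sum, Finset.mul_sum]
        apply Finset.sum_congr rfl
        intro v _
        rw [Finset.mul_sum]
        apply Finset.sum_congr rfl
        intro u _
        by_cases h1 : v ∉ B <;> by_cases h2 : u ∉ B <;> simp [h1, h2]
    _ = ∑ v ∈ S, ∑ u ∈ S, ∑ B ∈ A.powerset,
          (if v ∉ B ∧ u ∉ B then p ^ B.card * (1 - p) ^ (A.card - B.card) else 0) := by
        rw [Finset.sum_comm]
        exact Finset.sum_congr rfl fun v _ => Finset.sum_comm
    _ = ∑ v ∈ S, (((S.card : ℝ) - 1) * (1 - p) ^ 2 + (1 - p)) := by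
        apply Finset.sum_congr rfl
        intro v hv
        rw [← Finset.sum_erase_add _ _ hv]
        have h1 : ∑ u ∈ S.erase v, ∑ B ∈ A.powerset,
            (if v ∉ B ∧ u ∉ B then p ^ B.card * (1 - p) ^ (A.card - B.card) else 0)
            = ((S.card : ℝ) - 1) * (1 - p) ^ 2 := by
          rw [Finset.sum_congr rfl (fun u hu => pair_prob A p (hS hv)
              (hS (Finset.mem_of_mem_erase hu)) (fun h => (Finset.ne_of_mem_erase hu) h.symm)),
            Finset.sum_const, nsmul_eq_mul, Finset.card_erase_of_mem hv]
          congr 1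
          have : 1 ≤ S.card := Finset.card_pos.mpr ⟨v, hv⟩
          push_cast [this]
          ring
        have h2 : ∑ B ∈ A.powerset,
            (if v ∉ B ∧ v ∉ B then p ^ B.card * (1 - p) ^ (A.card - B.card) else 0)
            = 1 - p := by
          simp only [and_self]
          exact single_prob A p (hS hv)
        rw [h1, h2]
    _ = (S.card : ℝ) * (1 - p) + ((S.card : ℝ) ^ 2 - (S.card : ℝ)) * (1 - p) ^ 2 := by
        rw [Finset.sum_const, nsmul_eq_mul]
        ring

lemma cheb (A S : Finset V) (hS : S ⊆ A) (p t : ℝ) (hp0 : 0 ≤ p) (hp1 : p ≤ 1)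
    (ht : 0 < t) (htq : 2 * t ≤ (S.card : ℝ) * (1 - p)) :
    ∑ B ∈ A.powerset, (if ((S.filter (fun v => v ∉ B)).card : ℝ) < t
        then p ^ B.card * (1 - p) ^ (A.card - B.card) else 0)
      ≤ 4 / ((S.card : ℝ) * (1 - p)) := by
  set c : ℝ := (S.card : ℝ) * (1 - p) with hc
  have hc0 : 0 < c := lt_of_lt_of_le (by linarith) htq
  have key : ∑ B ∈ A.powerset, (p ^ B.card * (1 - p) ^ (A.card - B.card)) *
      (c - ((S.filter (fun v => v ∉ B)).card : ℝ)) ^ 2 ≤ c := by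
    have expand : ∀ B : Finset V, (p ^ B.card * (1 - p) ^ (A.card - B.card)) *
        (c - ((S.filter (fun v => v ∉ B)).card : ℝ)) ^ 2
        = c ^ 2 * (p ^ B.card * (1 - p) ^ (A.card - B.card))
          - 2 * c * ((p ^ B.card * (1 - p) ^ (A.card - B.card)) *
              ((S.filter (fun v => v ∉ B)).card : ℝ))
          + (p ^ B.card * (1 - p) ^ (A.card - B.card)) *
              ((S.filter (fun v => v ∉ B)).card : ℝ) ^ 2 := by
      intro B; ring
    rw [Finset.sum_congr rfl (fun B _ => expand B)]
    rw [Finset.sum_add_distrib, Finset.sum_sub_distrib, ← Finset.mul_sum, ← Finset.mul_sum,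
      sum_W, moment1 A S hS, moment2 A S hS]
    have hq1 : 1 - p ≤ 1 := by linarith
    have hq0 : 0 ≤ 1 - p := by linarith
    have hN : 0 ≤ (S.card : ℝ) := Nat.cast_nonneg _
    nlinarith [sq_nonneg ((S.card:ℝ) * (1-p))]
  have term : ∀ B ∈ A.powerset, (if ((S.filter (fun v => v ∉ B)).card : ℝ) < t
        then p ^ B.card * (1 - p) ^ (A.card - B.card) else 0)
      ≤ (4 / c ^ 2) * ((p ^ B.card * (1 - p) ^ (A.card - B.card)) *
          (c - ((S.filter (fun v => v ∉ B)).card : ℝ)) ^ 2) := by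
    intro B _
    have hW : (0:ℝ) ≤ p ^ B.card * (1 - p) ^ (A.card - B.card) := W_nonneg hp0 hp1 _ _
    by_cases hlt : ((S.filter (fun v => v ∉ B)).card : ℝ) < t
    · rw [if_pos hlt]
      set X : ℝ := ((S.filter (fun v => v ∉ B)).card : ℝ) with hXdef
      have hX0 : 0 ≤ X := Nat.cast_nonneg _
      have h1 : c ^ 2 ≤ 4 * (c - X) ^ 2 := by nlinarith
      have h2 : (1:ℝ) ≤ 4 / c ^ 2 * (c - X) ^ 2 := by
        rw [div_mul_eq_mul_div, le_div_iff₀ (by positivity)]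
        linarith
      nlinarith
    · rw [if_neg hlt]
      exact mul_nonneg (by positivity) (mul_nonneg hW (sq_nonneg _))
  calc ∑ B ∈ A.powerset, (if ((S.filter (fun v => v ∉ B)).card : ℝ) < t
        then p ^ B.card * (1 - p) ^ (A.card - B.card) else 0)
      ≤ ∑ B ∈ A.powerset, (4 / c ^ 2) * ((p ^ B.card * (1 - p) ^ (A.card - B.card)) *
          (c - ((S.filter (fun v => v ∉ B)).card : ℝ)) ^ 2) := Finset.sum_le_sum term
    _ = (4 / c ^ 2) * ∑ B ∈ A.powerset, ((p ^ B.card * (1 - p) ^ (A.card - B.card)) *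
          (c - ((S.filter (fun v => v ∉ B)).card : ℝ)) ^ 2) := by rw [Finset.mul_sum]
    _ ≤ (4 / c ^ 2) * c := by
        apply mul_le_mul_of_nonneg_left key (by positivity)
    _ = 4 / c := by field_simp


end HelperAux

set_option maxHeartbeats 1000000 in
/-- Theorem: let `r`, `k`, `ℓ` be positive integers, `ε` a real with `0 < ε < 1/2` and
`ε²·k ≥ 2^{12}·r`, and `G` a hypergraph on `n ≥ k` vertices all of whose edges are nonempty
sets of size at most `r`. Set `p = 1 - (1/2)·r^{-1/2}·k^{-1/2}`. Then for every `k`-element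
subset `A` with `e(A) = ℓ` and `ε·k ≤ m(A) ≤ (1-ε)·k`: if a random subset `B ⊆ A` is chosen
by including each element of `A` independently with probability `p`, then with probability
at least `1/2` the pair `(A,B)` is `ε`-pleasant. -/
theorem stmt_13 (r k ℓ : ℕ) (hr : 1 ≤ r) (hk : 1 ≤ k) (hℓ : 1 ≤ ℓ)
    (ε : ℝ) (hε0 : 0 < ε) (hε1 : ε < 1 / 2) (hεk : 2 ^ 12 * (r : ℝ) ≤ ε ^ 2 * (k : ℝ))
    (n : ℕ) (hn : k ≤ n)
    (E : Finset (Finset (Fin n))) (hE : ∀ e ∈ E, e.Nonempty ∧ e.card ≤ r)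
    (p : ℝ) (hp : p = 1 - (1 / 2 : ℝ) * (Real.sqrt r)⁻¹ * (Real.sqrt k)⁻¹)
    (A : Finset (Fin n)) (hA : A.card = k) (heA : hyperEdgesIn E A = ℓ)
    (hm1 : ε * (k : ℝ) ≤ (hyperM E A : ℝ)) (hm2 : (hyperM E A : ℝ) ≤ (1 - ε) * (k : ℝ)) :
    (1 / 2 : ℝ) ≤ ∑ B ∈ A.powerset,
      (if Pleasant E r k ℓ ε A B then p ^ B.card * (1 - p) ^ (A.card - B.card) else 0) := by
  have hr0 : (0:ℝ) < r := by exact_mod_cast hr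
  have hk0 : (0:ℝ) < k := by exact_mod_cast hk
  have hsr0 : 0 < Real.sqrt r := Real.sqrt_pos.mpr hr0
  have hsk0 : 0 < Real.sqrt k := Real.sqrt_pos.mpr hk0
  have hsr1 : 1 ≤ Real.sqrt r := by
    rw [show (1:ℝ) = Real.sqrt 1 by simp]
    exact Real.sqrt_le_sqrt (by exact_mod_cast hr)
  have hsk1 : 1 ≤ Real.sqrt k := by
    rw [show (1:ℝ) = Real.sqrt 1 by simp]
    exact Real.sqrt_le_sqrt (by exact_mod_cast hk)
  have hrr : Real.sqrt r * Real.sqrt r = r := Real.mul_self_sqrt hr0.le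
  have hkk : Real.sqrt k * Real.sqrt k = k := Real.mul_self_sqrt hk0.le
  have hq : 1 - p = (1/2) * (Real.sqrt r)⁻¹ * (Real.sqrt k)⁻¹ := by rw [hp]; ring
  have hq0 : 0 < 1 - p := by rw [hq]; positivity
  have hqle : 1 - p ≤ 1/2 := by
    rw [hq]
    have hir : (Real.sqrt r)⁻¹ * Real.sqrt r = 1 := inv_mul_cancel₀ (ne_of_gt hsr0)
    have hik : (Real.sqrt k)⁻¹ * Real.sqrt k = 1 := inv_mul_cancel₀ (ne_of_gt hsk0)
    have h3 : (0:ℝ) ≤ (Real.sqrt r)⁻¹ := by positivity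
    have h4 : (0:ℝ) ≤ (Real.sqrt k)⁻¹ := by positivity
    have h1 : (Real.sqrt r)⁻¹ ≤ 1 := by nlinarith
    have h2 : (Real.sqrt k)⁻¹ ≤ 1 := by nlinarith
    nlinarith
  have hp0 : 0 ≤ p := by linarith
  have hp1 : p ≤ 1 := by linarith
  set t : ℝ := (1 / 4 : ℝ) * (Real.sqrt r)⁻¹ * ε * Real.sqrt k with htdef
  have ht0 : 0 < t := by
    rw [htdef]
    have : (0:ℝ) < (1/4 : ℝ) * (Real.sqrt r)⁻¹ := by positivity
    exact mul_pos (mul_pos this hε0) hsk0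
  have ht16 : 16 ≤ t := by
    have e1 : ((2:ℝ)^6 * Real.sqrt r)^2 = 2^12 * (r:ℝ) := by
      rw [mul_pow, Real.sq_sqrt hr0.le]; norm_num
    have e2 : (ε * Real.sqrt k)^2 = ε^2 * (k:ℝ) := by
      rw [mul_pow, Real.sq_sqrt hk0.le]
    have hsq : ((2:ℝ)^6 * Real.sqrt r)^2 ≤ (ε * Real.sqrt k)^2 := by
      rw [e1, e2]; exact hεk
    have h0 : (0:ℝ) ≤ 2^6 * Real.sqrt r := by positivity
    have h0' : (0:ℝ) ≤ ε * Real.sqrt k := by positivity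
    have h1 : (2:ℝ)^6 * Real.sqrt r ≤ ε * Real.sqrt k := by
      have h2 := Real.sqrt_le_sqrt hsq
      rwa [Real.sqrt_sq h0, Real.sqrt_sq h0'] at h2
    have h3 : (Real.sqrt r)⁻¹ * ((2:ℝ)^6 * Real.sqrt r) ≤ (Real.sqrt r)⁻¹ * (ε * Real.sqrt k) :=
      mul_le_mul_of_nonneg_left h1 (by positivity)
    have hcan : (Real.sqrt r)⁻¹ * ((2:ℝ)^6 * Real.sqrt r) = 2^6 := by
      field_simp
    have h4 : t = (1/4) * ((Real.sqrt r)⁻¹ * (ε * Real.sqrt k)) := by rw [htdef]; ring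
    rw [h4]; rw [hcan] at h3; norm_num at h3 ⊢; linarith
  -- non-isolated and isolated vertices
  set NI := A.filter (fun v => ∃ e ∈ E, e ⊆ A ∧ v ∈ e) with hNIdef
  set IS := A.filter (fun v => ¬ ∃ e ∈ E, e ⊆ A ∧ v ∈ e) with hISdef
  have hMNI : hyperM E A = NI.card := by rw [hNIdef]; rfl
  have hNIsub : NI ⊆ A := by rw [hNIdef]; exact Finset.filter_subset _ _
  have hISsub : IS ⊆ A := by rw [hISdef]; exact Finset.filter_subset _ _
  have hNIk : NI.card + IS.card = k := by
    rw [hNIdef, hISdef, ← hA]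
    exact Finset.card_filter_add_card_filter_not _
  have hm_real : ε * k ≤ (NI.card : ℝ) := by rw [hMNI] at hm1; exact hm1
  have hm2_real : (NI.card : ℝ) ≤ (1 - ε) * k := by rw [hMNI] at hm2; exact hm2
  have hISk : (IS.card : ℝ) = k - NI.card := by
    have := congrArg (fun x : ℕ => (x:ℝ)) hNIk
    push_cast at this
    linarith
  have hIS_real : ε * k ≤ (IS.card : ℝ) := by rw [hISk]; linarith
  have hεkq : ε * k * (1 - p) = 2 * t := by
    have hk' : (k:ℝ) * (Real.sqrt k)⁻¹ = Real.sqrt k := by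
      rw [eq_comm, eq_mul_inv_iff_mul_eq₀ (ne_of_gt hsk0)]; exact hkk
    calc ε * k * (1-p) = ε * ((k:ℝ) * (Real.sqrt k)⁻¹) * ((1/2) * (Real.sqrt r)⁻¹) := by
          rw [hq]; ring
      _ = ε * Real.sqrt k * ((1/2) * (Real.sqrt r)⁻¹) := by rw [hk']
      _ = 2 * t := by rw [htdef]; ring
  have hq2 : (1-p)^2 = (1/4) * ((r:ℝ)⁻¹ * (k:ℝ)⁻¹) := by
    have h1 : ((Real.sqrt r)⁻¹)^2 = (r:ℝ)⁻¹ := by rw [sq, ← mul_inv, hrr]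
    have h2 : ((Real.sqrt k)⁻¹)^2 = (k:ℝ)⁻¹ := by rw [sq, ← mul_inv, hkk]
    calc (1-p)^2 = ((Real.sqrt r)⁻¹)^2 * ((Real.sqrt k)⁻¹)^2 * (1/4) := by rw [hq]; ring
      _ = (1/4) * ((r:ℝ)⁻¹ * (k:ℝ)⁻¹) := by rw [h1, h2]; ring
  -- Chebyshev bounds
  have P2 : ∑ B ∈ A.powerset, (if ((NI.filter (fun v => v ∉ B)).card : ℝ) < t
      then p ^ B.card * (1 - p) ^ (A.card - B.card) else 0) ≤ 1/8 := by
    have hc2 : 2 * t ≤ (NI.card : ℝ) * (1 - p) := by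
      calc 2*t = ε * k * (1-p) := hεkq.symm
        _ ≤ (NI.card : ℝ) * (1-p) := mul_le_mul_of_nonneg_right hm_real hq0.le
    refine le_trans (cheb A NI hNIsub p t hp0 hp1 ht0 hc2) ?_
    have hc0 : 0 < (NI.card : ℝ) * (1 - p) := lt_of_lt_of_le (by linarith) hc2
    rw [div_le_div_iff₀ hc0 (by norm_num)]
    linarith
  have P3 : ∑ B ∈ A.powerset, (if ((IS.filter (fun v => v ∉ B)).card : ℝ) < t
      then p ^ B.card * (1 - p) ^ (A.card - B.card) else 0) ≤ 1/8 := by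
    have hc2 : 2 * t ≤ (IS.card : ℝ) * (1 - p) := by
      calc 2*t = ε * k * (1-p) := hεkq.symm
        _ ≤ (IS.card : ℝ) * (1-p) := mul_le_mul_of_nonneg_right hIS_real hq0.le
    refine le_trans (cheb A IS hISsub p t hp0 hp1 ht0 hc2) ?_
    have hc0 : 0 < (IS.card : ℝ) * (1 - p) := lt_of_lt_of_le (by linarith) hc2
    rw [div_le_div_iff₀ hc0 (by norm_num)]
    linarith
  -- Markov bound for f
  have pointwise1 : ∀ B ∈ A.powerset,
      (if 1 ≤ hyperF E A B then p ^ B.card * (1 - p) ^ (A.card - B.card) else 0)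
      ≤ ∑ v ∈ NI, (if v ∉ B ∧ ¬(∃ e ∈ E, v ∈ e ∧ e \ {v} ⊆ B)
          then p ^ B.card * (1 - p) ^ (A.card - B.card) else 0) := by
    intro B hB
    have hWB : (0:ℝ) ≤ p ^ B.card * (1 - p) ^ (A.card - B.card) := W_nonneg hp0 hp1 _ _
    by_cases b1 : 1 ≤ hyperF E A B
    · rw [if_pos b1]
      have hsub : (A \ B).filter (fun v => ∃ e ∈ E, e ⊆ A ∧ v ∈ e)
          ⊆ ((A \ B).filter (fun v => ∃ e ∈ E, v ∈ e ∧ e \ {v} ⊆ B))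
            ∪ (NI.filter (fun v => v ∉ B ∧ ¬(∃ e ∈ E, v ∈ e ∧ e \ {v} ⊆ B))) := by
        intro v hv
        rw [Finset.mem_filter, Finset.mem_sdiff] at hv
        obtain ⟨⟨hvA, hvB⟩, hni⟩ := hv
        by_cases hc : ∃ e ∈ E, v ∈ e ∧ e \ {v} ⊆ B
        · exact Finset.mem_union_left _
            (Finset.mem_filter.mpr ⟨Finset.mem_sdiff.mpr ⟨hvA, hvB⟩, hc⟩)
        · refine Finset.mem_union_right _ (Finset.mem_filter.mpr ⟨?_, hvB, hc⟩)
          rw [hNIdef]; exact Finset.mem_filter.mpr ⟨hvA, hni⟩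
      have hcard : hyperMAB E A B ≤ hyperH E A B
          + (NI.filter (fun v => v ∉ B ∧ ¬(∃ e ∈ E, v ∈ e ∧ e \ {v} ⊆ B))).card := by
        calc hyperMAB E A B ≤ (((A \ B).filter (fun v => ∃ e ∈ E, v ∈ e ∧ e \ {v} ⊆ B))
              ∪ (NI.filter (fun v => v ∉ B ∧ ¬(∃ e ∈ E, v ∈ e ∧ e \ {v} ⊆ B)))).card :=
            Finset.card_le_card hsub
          _ ≤ _ := Finset.card_union_le _ _
      have hf : 1 ≤ hyperMAB E A B - hyperH E A B := b1
      have hD : 1 ≤ (NI.filter (fun v => v ∉ B ∧ ¬(∃ e ∈ E, v ∈ e ∧ e \ {v} ⊆ B))).card := by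
        omega
      obtain ⟨v, hv⟩ := Finset.card_pos.mp hD
      have hvNI : v ∈ NI := (Finset.mem_filter.mp hv).1
      have hvprop := (Finset.mem_filter.mp hv).2
      have hle := Finset.single_le_sum
        (f := fun v => if v ∉ B ∧ ¬(∃ e ∈ E, v ∈ e ∧ e \ {v} ⊆ B)
          then p ^ B.card * (1 - p) ^ (A.card - B.card) else 0)
        (fun i _ => by split_ifs; exacts [hWB, le_rfl]) hvNI
      refine le_trans ?_ hle
      simp only [if_pos hvprop, le_refl]
    · rw [if_neg b1]
      exact Finset.sum_nonneg (fun i _ => by split_ifs; exacts [hWB, le_rfl])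
  have pointwise2 : ∀ v ∈ NI,
      (∑ B ∈ A.powerset, if v ∉ B ∧ ¬(∃ e ∈ E, v ∈ e ∧ e \ {v} ⊆ B)
          then p ^ B.card * (1 - p) ^ (A.card - B.card) else 0)
      ≤ (r:ℝ) * (1 - p)^2 := by
    intro v hv
    rw [hNIdef] at hv
    have hvA : v ∈ A := (Finset.mem_filter.mp hv).1
    obtain ⟨e, heE, heA, hve⟩ := (Finset.mem_filter.mp hv).2
    have step : ∀ B ∈ A.powerset,
        (if v ∉ B ∧ ¬(∃ e ∈ E, v ∈ e ∧ e \ {v} ⊆ B)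
          then p ^ B.card * (1 - p) ^ (A.card - B.card) else 0)
        ≤ ∑ u ∈ e \ {v}, (if v ∉ B ∧ u ∉ B
            then p ^ B.card * (1 - p) ^ (A.card - B.card) else 0) := by
      intro B _
      have hWB : (0:ℝ) ≤ p ^ B.card * (1 - p) ^ (A.card - B.card) := W_nonneg hp0 hp1 _ _
      by_cases hcond : v ∉ B ∧ ¬(∃ e ∈ E, v ∈ e ∧ e \ {v} ⊆ B)
      · rw [if_pos hcond]
        obtain ⟨hvB, hnc⟩ := hcond
        push_neg at hnc
        obtain ⟨u, hue, huB⟩ := Finset.not_subset.mp (hnc e heE hve)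
        have hle := Finset.single_le_sum
          (f := fun u => if v ∉ B ∧ u ∉ B
            then p ^ B.card * (1 - p) ^ (A.card - B.card) else 0)
          (fun i _ => by split_ifs; exacts [hWB, le_rfl]) hue
        refine le_trans ?_ hle
        simp [hvB, huB]
      · rw [if_neg hcond]
        exact Finset.sum_nonneg (fun i _ => by split_ifs; exacts [hWB, le_rfl])
    calc (∑ B ∈ A.powerset, if v ∉ B ∧ ¬(∃ e ∈ E, v ∈ e ∧ e \ {v} ⊆ B)
            then p ^ B.card * (1 - p) ^ (A.card - B.card) else 0)
        ≤ ∑ B ∈ A.powerset, ∑ u ∈ e \ {v}, (if v ∉ B ∧ u ∉ B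
            then p ^ B.card * (1 - p) ^ (A.card - B.card) else 0) := Finset.sum_le_sum step
      _ = ∑ u ∈ e \ {v}, ∑ B ∈ A.powerset, (if v ∉ B ∧ u ∉ B
            then p ^ B.card * (1 - p) ^ (A.card - B.card) else 0) := Finset.sum_comm
      _ = ∑ u ∈ e \ {v}, (1-p)^2 := by
          apply Finset.sum_congr rfl
          intro u hu
          have hu' := Finset.mem_sdiff.mp hu
          have hune : u ≠ v := by
            intro h; exact hu'.2 (by simp [h])
          exact pair_prob A p hvA (heA hu'.1) hune.symm
      _ = ((e \ {v}).card : ℝ) * (1-p)^2 := by rw [Finset.sum_const, nsmul_eq_mul]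
      _ ≤ (r:ℝ) * (1-p)^2 := by
          apply mul_le_mul_of_nonneg_right _ (sq_nonneg _)
          have h1 : (e \ {v}).card ≤ e.card := Finset.card_le_card Finset.sdiff_subset
          have h2 := (hE e heE).2
          exact_mod_cast le_trans h1 h2
  have P1 : ∑ B ∈ A.powerset, (if 1 ≤ hyperF E A B
      then p ^ B.card * (1 - p) ^ (A.card - B.card) else 0) ≤ (1 - ε)/4 := by
    calc ∑ B ∈ A.powerset, (if 1 ≤ hyperF E A B
          then p ^ B.card * (1 - p) ^ (A.card - B.card) else 0)
        ≤ ∑ B ∈ A.powerset, ∑ v ∈ NI, (if v ∉ B ∧ ¬(∃ e ∈ E, v ∈ e ∧ e \ {v} ⊆ B)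
            then p ^ B.card * (1 - p) ^ (A.card - B.card) else 0) := Finset.sum_le_sum pointwise1
      _ = ∑ v ∈ NI, ∑ B ∈ A.powerset, (if v ∉ B ∧ ¬(∃ e ∈ E, v ∈ e ∧ e \ {v} ⊆ B)
            then p ^ B.card * (1 - p) ^ (A.card - B.card) else 0) := Finset.sum_comm
      _ ≤ ∑ v ∈ NI, (r:ℝ) * (1-p)^2 := Finset.sum_le_sum pointwise2
      _ = (NI.card : ℝ) * ((r:ℝ) * (1-p)^2) := by rw [Finset.sum_const, nsmul_eq_mul]
      _ ≤ ((1-ε) * k) * ((r:ℝ) * (1-p)^2) := by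
          apply mul_le_mul_of_nonneg_right hm2_real
          positivity
      _ = (1 - ε)/4 := by
          rw [hq2]
          field_simp
  -- pleasantness from the three good events
  have pls : ∀ B ∈ A.powerset, ¬(1 ≤ hyperF E A B) →
      ¬(((NI.filter (fun v => v ∉ B)).card : ℝ) < t) →
      ¬(((IS.filter (fun v => v ∉ B)).card : ℝ) < t) →
      Pleasant E r k ℓ ε A B := by
    intro B hB b1 b2 b3
    have hBA : B ⊆ A := Finset.mem_powerset.mp hB
    have hf : hyperMAB E A B - hyperH E A B = 0 := by
      have : ¬ (1 ≤ hyperMAB E A B - hyperH E A B) := b1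
      omega
    have hf0 : hyperF E A B = 0 := hf
    have hHsub : hyperH E A B ≤ hyperMAB E A B := by
      unfold hyperH hyperMAB
      apply Finset.card_le_card
      intro v hv
      rw [Finset.mem_filter] at hv ⊢
      obtain ⟨hvAB, e, heE, hve, heB⟩ := hv
      refine ⟨hvAB, e, heE, ?_, hve⟩
      intro x hx
      by_cases hxv : x = v
      · subst hxv; exact (Finset.mem_sdiff.mp hvAB).1
      · exact hBA (heB (Finset.mem_sdiff.mpr ⟨hx, by simp [hxv]⟩))
    have hHM : hyperH E A B = hyperMAB E A B :=
      le_antisymm hHsub (Nat.sub_eq_zero_iff_le.mp hf)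
    have hMX : hyperMAB E A B = (NI.filter (fun v => v ∉ B)).card := by
      unfold hyperMAB
      congr 1
      ext v
      simp only [hNIdef, Finset.mem_filter, Finset.mem_sdiff]
      tauto
    have hiii : t ≤ (hyperH E A B : ℝ) := by
      have hx := not_lt.mp b2
      rw [hHM, hMX]
      exact hx
    have hcard4 : hyperH E A B + (IS.filter (fun v => v ∉ B)).card ≤ (A \ B).card := by
      have hdisj : Disjoint ((A \ B).filter (fun v => ∃ e ∈ E, v ∈ e ∧ e \ {v} ⊆ B))
          (IS.filter (fun v => v ∉ B)) := by
        rw [Finset.disjoint_left]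
        intro v hv1 hv2
        obtain ⟨e, heE, hve, heB⟩ := (Finset.mem_filter.mp hv1).2
        have hvA : v ∈ A := (Finset.mem_sdiff.mp (Finset.mem_filter.mp hv1).1).1
        have hnon : ∃ e ∈ E, e ⊆ A ∧ v ∈ e := by
          refine ⟨e, heE, ?_, hve⟩
          intro x hx
          by_cases hxv : x = v
          · subst hxv; exact hvA
          · exact hBA (heB (Finset.mem_sdiff.mpr ⟨hx, by simp [hxv]⟩))
        have hvIS : v ∈ IS := (Finset.mem_filter.mp hv2).1
        rw [hISdef] at hvIS
        exact (Finset.mem_filter.mp hvIS).2 hnon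
      have hsub2 : ((A \ B).filter (fun v => ∃ e ∈ E, v ∈ e ∧ e \ {v} ⊆ B))
          ∪ (IS.filter (fun v => v ∉ B)) ⊆ A \ B := by
        apply Finset.union_subset (Finset.filter_subset _ _)
        intro v hv
        rw [Finset.mem_filter] at hv
        exact Finset.mem_sdiff.mpr ⟨hISsub hv.1, hv.2⟩
      calc hyperH E A B + (IS.filter (fun v => v ∉ B)).card
          = (((A \ B).filter (fun v => ∃ e ∈ E, v ∈ e ∧ e \ {v} ⊆ B))
            ∪ (IS.filter (fun v => v ∉ B))).card := (Finset.card_union_of_disjoint hdisj).symm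
        _ ≤ (A \ B).card := Finset.card_le_card hsub2
    have hiv : t ≤ ((A \ B).card : ℝ) - (hyperH E A B : ℝ) := by
      have hy : t ≤ ((IS.filter (fun v => v ∉ B)).card : ℝ) := not_lt.mp b3
      have hcast : (hyperH E A B : ℝ) + ((IS.filter (fun v => v ∉ B)).card : ℝ)
          ≤ ((A \ B).card : ℝ) := by exact_mod_cast hcard4
      linarith
    refine ⟨hBA, hA, heA, hf0, ?_, ?_⟩
    · rw [← htdef]; exact hiii
    · rw [← htdef]; exact hiv
  -- combine
  have main : ∀ B ∈ A.powerset,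
      p ^ B.card * (1 - p) ^ (A.card - B.card)
        - (if 1 ≤ hyperF E A B then p ^ B.card * (1 - p) ^ (A.card - B.card) else 0)
        - (if ((NI.filter (fun v => v ∉ B)).card : ℝ) < t
            then p ^ B.card * (1 - p) ^ (A.card - B.card) else 0)
        - (if ((IS.filter (fun v => v ∉ B)).card : ℝ) < t
            then p ^ B.card * (1 - p) ^ (A.card - B.card) else 0)
      ≤ (if Pleasant E r k ℓ ε A B then p ^ B.card * (1 - p) ^ (A.card - B.card) else 0) := by
    intro B hB
    have hWB : (0:ℝ) ≤ p ^ B.card * (1 - p) ^ (A.card - B.card) := W_nonneg hp0 hp1 _ _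
    have n1 : (0:ℝ) ≤ (if 1 ≤ hyperF E A B
        then p ^ B.card * (1 - p) ^ (A.card - B.card) else 0) := by
      split_ifs; exacts [hWB, le_rfl]
    have n2 : (0:ℝ) ≤ (if ((NI.filter (fun v => v ∉ B)).card : ℝ) < t
        then p ^ B.card * (1 - p) ^ (A.card - B.card) else 0) := by
      split_ifs; exacts [hWB, le_rfl]
    have n3 : (0:ℝ) ≤ (if ((IS.filter (fun v => v ∉ B)).card : ℝ) < t
        then p ^ B.card * (1 - p) ^ (A.card - B.card) else 0) := by
      split_ifs; exacts [hWB, le_rfl]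
    have n4 : (0:ℝ) ≤ (if Pleasant E r k ℓ ε A B
        then p ^ B.card * (1 - p) ^ (A.card - B.card) else 0) := by
      split_ifs; exacts [hWB, le_rfl]
    by_cases b1 : 1 ≤ hyperF E A B
    · rw [if_pos b1]; linarith
    by_cases b2 : ((NI.filter (fun v => v ∉ B)).card : ℝ) < t
    · rw [if_pos b2]; linarith
    by_cases b3 : ((IS.filter (fun v => v ∉ B)).card : ℝ) < t
    · rw [if_pos b3]; linarith
    rw [if_neg b1, if_neg b2, if_neg b3, if_pos (pls B hB b1 b2 b3)]
    linarith
  calc (1/2 : ℝ) ≤ 1 - (1-ε)/4 - 1/8 - 1/8 := by linarith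
    _ ≤ (∑ B ∈ A.powerset, p ^ B.card * (1 - p) ^ (A.card - B.card))
        - (∑ B ∈ A.powerset, (if 1 ≤ hyperF E A B
            then p ^ B.card * (1 - p) ^ (A.card - B.card) else 0))
        - (∑ B ∈ A.powerset, (if ((NI.filter (fun v => v ∉ B)).card : ℝ) < t
            then p ^ B.card * (1 - p) ^ (A.card - B.card) else 0))
        - (∑ B ∈ A.powerset, (if ((IS.filter (fun v => v ∉ B)).card : ℝ) < t
            then p ^ B.card * (1 - p) ^ (A.card - B.card) else 0)) := by
        rw [sum_W]
        linarith
    _ = ∑ B ∈ A.powerset, (p ^ B.card * (1 - p) ^ (A.card - B.card)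
        - (if 1 ≤ hyperF E A B then p ^ B.card * (1 - p) ^ (A.card - B.card) else 0)
        - (if ((NI.filter (fun v => v ∉ B)).card : ℝ) < t
            then p ^ B.card * (1 - p) ^ (A.card - B.card) else 0)
        - (if ((IS.filter (fun v => v ∉ B)).card : ℝ) < t
            then p ^ B.card * (1 - p) ^ (A.card - B.card) else 0)) := by
        rw [Finset.sum_sub_distrib, Finset.sum_sub_distrib, Finset.sum_sub_distrib]
    _ ≤ ∑ B ∈ A.powerset,
        (if Pleasant E r k ℓ ε A B then p ^ B.card * (1 - p) ^ (A.card - B.card) else 0) :=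
      Finset.sum_le_sum main
end

section
/- For every real ε > 0 there exists an integer K such that for all integers k ≥ K, all integers j with 1 ≤ j ≤ k−1, and all real numbers x with 0 < x < 1, one has binom(k,j)·x^j·(1−x)^{k−j} ≤ 1/e + ε. -/
/-!
By weighted AM-GM, `x ^ j * (1 - x) ^ m` is maximal at `x = j / (j + m)`, so with `k = j + m` the
quantity is at most the peak value `C(k, j) (j/k)^j (m/k)^m`. The two-sided Stirling bounds
`√(2πn) (n/e)^n ≤ n! ≤ e √n (n/e)^n` bound this peak by `e/(2π) · √(k/(jm))`, which is below `1/e`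
as soon as `j, m ≥ 2` and `k ≥ 12`. In the remaining case `j = 1` (or symmetrically `m = 1`) the
peak is `(1 - 1/k)^(k-1) ≤ e⁻¹ · k/(k-1)`, which tends to `1/e`.
-/

open Real
open scoped Nat

theorem pow_mul_one_sub_pow_le {j m : ℕ} (hj : 0 < j) (hm : 0 < m) {x : ℝ} (hx₀ : 0 ≤ x)
    (hx₁ : x ≤ 1) :
    x ^ j * (1 - x) ^ m ≤ (j / (j + m) : ℝ) ^ j * (m / (j + m) : ℝ) ^ m := by
  have hj' : (0 : ℝ) < j := by exact_mod_cast hj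
  have hm' : (0 : ℝ) < m := by exact_mod_cast hm
  set n : ℝ := j + m
  have hn : 0 < n := by positivity
  -- weighted AM-GM with weights `j/n, m/n` at the points `x n / j, (1 - x) n / m`
  have amgm := geom_mean_le_arith_mean2_weighted (w₁ := j / n) (w₂ := m / n)
    (p₁ := x * n / j) (p₂ := (1 - x) * n / m) (by positivity) (by positivity)
    (by positivity) (div_nonneg (mul_nonneg (by linarith) hn.le) hm'.le)
    (by rw [← add_div, div_self hn.ne'])
  have hsum : j / n * (x * n / j) + m / n * ((1 - x) * n / m) = 1 := by field_simp; ring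
  have key : (x * n / j) ^ j * ((1 - x) * n / m) ^ m ≤ 1 := by
    have := pow_le_one₀ (n := j + m) (by positivity) (hsum ▸ amgm)
    rwa [mul_pow, ← rpow_natCast, ← rpow_natCast, ← rpow_mul (by positivity),
      ← rpow_mul (div_nonneg (mul_nonneg (by linarith) hn.le) hm'.le), Nat.cast_add,
      div_mul_cancel₀ _ hn.ne', div_mul_cancel₀ _ hn.ne', rpow_natCast, rpow_natCast] at this
  calc x ^ j * (1 - x) ^ m
      = (j / n) ^ j * (m / n) ^ m * ((x * n / j) ^ j * ((1 - x) * n / m) ^ m) := by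
        rw [mul_mul_mul_comm, ← mul_pow, ← mul_pow]
        congr 2 <;> field_simp
    _ ≤ (j / n) ^ j * (m / n) ^ m := mul_le_of_le_one_right (by positivity) key

theorem factorial_le_exp_one_mul_sqrt_mul {n : ℕ} (hn : n ≠ 0) :
    (n ! : ℝ) ≤ exp 1 * √n * (n / exp 1) ^ n := by
  obtain ⟨p, rfl⟩ : ∃ p, n = p + 1 := ⟨n - 1, by omega⟩
  -- the Stirling sequence `n! / (√(2n) (n/e)^n)` decreases from its first term `e / √2`
  have hmono : Stirling.stirlingSeq (p + 1) ≤ Stirling.stirlingSeq 1 :=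
    Stirling.stirlingSeq'_antitone (Nat.zero_le p)
  rw [Stirling.stirlingSeq_one, Stirling.stirlingSeq,
    div_le_div_iff₀ (by positivity) (by positivity)] at hmono
  have hsqrt : √(2 * ((p + 1 : ℕ) : ℝ)) = √2 * √((p + 1 : ℕ) : ℝ) := sqrt_mul zero_le_two _
  rw [hsqrt] at hmono
  exact le_of_mul_le_mul_right (hmono.trans_eq (by ring)) (by positivity)

/-- The value of `C(j+m, j) x^j (1-x)^m` at its maximiser `x = j/(j+m)`. -/
noncomputable def bernsteinPeak (j m : ℕ) : ℝ :=
  ((j + m).choose j : ℝ) * (j / (j + m) : ℝ) ^ j * (m / (j + m) : ℝ) ^ m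

theorem bernsteinPeak_le_sqrt {j m : ℕ} (hj : 0 < j) (hm : 0 < m) :
    bernsteinPeak j m ≤ exp 1 / (2 * π) * √((j + m) / (j * m)) := by
  have hj' : (0 : ℝ) < j := by exact_mod_cast hj
  have hm' : (0 : ℝ) < m := by exact_mod_cast hm
  have hchoose : ((j + m).choose j : ℝ) = (j + m)! / (j ! * m !) := by
    rw [Nat.cast_choose ℝ (Nat.le_add_right j m), Nat.add_sub_cancel_left]
  have hpow : ((j + m : ℕ) / exp 1 : ℝ) ^ (j + m) * ((j / (j + m) : ℝ) ^ j * (m / (j + m) : ℝ) ^ m)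
      = (j / exp 1) ^ j * (m / exp 1) ^ m := by
    rw [pow_add, mul_mul_mul_comm, ← mul_pow, ← mul_pow]
    push_cast
    congr 2 <;> field_simp
  have hsqrt : √(2 * π * j) * √(2 * π * m) = 2 * π * √(j * m) := by
    rw [← sqrt_mul (by positivity), show 2 * π * j * (2 * π * m) = (2 * π) ^ 2 * (j * m) by ring,
      sqrt_mul (by positivity), sqrt_sq (by positivity)]
  calc bernsteinPeak j m
      = (j + m)! * ((j / (j + m) : ℝ) ^ j * (m / (j + m) : ℝ) ^ m) / (j ! * m !) := by
        rw [bernsteinPeak, hchoose]; ring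
    _ ≤ exp 1 * √((j + m : ℕ) : ℝ) * ((j + m : ℕ) / exp 1 : ℝ) ^ (j + m) *
          ((j / (j + m) : ℝ) ^ j * (m / (j + m) : ℝ) ^ m) /
        (√(2 * π * j) * (j / exp 1) ^ j * (√(2 * π * m) * (m / exp 1) ^ m)) := by
        gcongr
        · exact factorial_le_exp_one_mul_sqrt_mul (by omega)
        · exact Stirling.le_factorial_stirling j
        · exact Stirling.le_factorial_stirling m
    _ = exp 1 * √((j + m : ℕ) : ℝ) * ((j / exp 1) ^ j * (m / exp 1) ^ m) /
        (2 * π * √(j * m) * ((j / exp 1) ^ j * (m / exp 1) ^ m)) := by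
        rw [mul_assoc _ (_ ^ (j + m)), hpow, ← hsqrt]; ring
    _ = exp 1 / (2 * π) * √((j + m) / (j * m)) := by
        rw [mul_div_mul_right _ _ (by positivity), sqrt_div (by positivity)]
        push_cast
        ring

theorem bernsteinPeak_comm (j m : ℕ) : bernsteinPeak j m = bernsteinPeak m j := by
  rw [bernsteinPeak, bernsteinPeak, Nat.choose_symm_add, add_comm m, add_comm (m : ℝ)]
  ring

theorem bernsteinPeak_one_left_le {m : ℕ} (hm : 0 < m) :
    bernsteinPeak 1 m ≤ (exp 1)⁻¹ * (1 + 1 / m) := by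
  have hm' : (0 : ℝ) < m := by exact_mod_cast hm
  have h := one_sub_div_pow_le_exp_neg (n := m + 1) (t := 1) (by simp)
  calc bernsteinPeak 1 m
      = (1 - 1 / (m + 1 : ℕ)) ^ (m + 1) * (1 + 1 / m) := by
        have hbase : 1 - 1 / ((m + 1 : ℕ) : ℝ) = m / (1 + m) := by push_cast; field_simp; ring
        rw [hbase, pow_succ, bernsteinPeak, Nat.choose_one_right]
        push_cast
        field_simp
        ring
    _ ≤ (exp 1)⁻¹ * (1 + 1 / m) := by
        rw [← exp_neg]
        gcongr

theorem bernsteinPeak_le_exp_neg_one {j m : ℕ} (hj : 2 ≤ j) (hm : 2 ≤ m) (h : 12 ≤ j + m) :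
    bernsteinPeak j m ≤ (exp 1)⁻¹ := by
  have hj' : (2 : ℝ) ≤ j := by exact_mod_cast hj
  have hm' : (2 : ℝ) ≤ m := by exact_mod_cast hm
  have h' : (12 : ℝ) ≤ j + m := by exact_mod_cast h
  -- `1/j + 1/m ≤ 3/5` is extremal at `(j, m) = (2, 10)`
  have hratio : (j + m) / (j * m) ≤ (3 / 5 : ℝ) := by
    rw [div_le_iff₀ (by positivity)]
    nlinarith [mul_nonneg (sub_nonneg.2 hj') (sub_nonneg.2 hm')]
  have hsqrt : √(3 / 5 : ℝ) ≤ 0.775 := sqrt_le_iff.2 ⟨by norm_num, by norm_num⟩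
  have he := exp_one_lt_d9
  have hπ := pi_gt_d2
  calc bernsteinPeak j m ≤ exp 1 / (2 * π) * √((j + m) / (j * m)) :=
        bernsteinPeak_le_sqrt (by omega) (by omega)
    _ ≤ exp 1 / (2 * π) * 0.775 := by gcongr; exact (sqrt_le_sqrt hratio).trans hsqrt
    _ ≤ (exp 1)⁻¹ := by
        rw [div_mul_eq_mul_div, div_le_iff₀ (by positivity), inv_mul_eq_div,
          le_div_iff₀ (exp_pos 1)]
        nlinarith [exp_pos 1]

theorem bernsteinPeak_le {j m : ℕ} (hj : 0 < j) (hm : 0 < m) (h : 12 ≤ j + m) :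
    bernsteinPeak j m ≤ (exp 1)⁻¹ + 1 / (j + m - 1 : ℝ) := by
  have edge : ∀ n : ℕ, 0 < n → bernsteinPeak 1 n ≤ (exp 1)⁻¹ + 1 / n := fun n hn ↦
    calc bernsteinPeak 1 n ≤ (exp 1)⁻¹ * (1 + 1 / n) := bernsteinPeak_one_left_le hn
      _ ≤ (exp 1)⁻¹ + 1 / n := by
        rw [mul_one_add]
        gcongr
        exact mul_le_of_le_one_left (by positivity) (inv_le_one_of_one_le₀ (one_le_exp zero_le_one))
  rcases Nat.lt_or_ge j 2 with hj1 | hj2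
  · obtain rfl : j = 1 := by omega
    simpa using edge m hm
  rcases Nat.lt_or_ge m 2 with hm1 | hm2
  · obtain rfl : m = 1 := by omega
    simpa [bernsteinPeak_comm j] using edge j hj
  have h' : (12 : ℝ) ≤ j + m := by exact_mod_cast h
  exact (bernsteinPeak_le_exp_neg_one hj2 hm2 h).trans
    (le_add_of_nonneg_right (one_div_nonneg.2 (by linarith)))

/-- Theorem: for every real `ε > 0` there is an integer `K` such that for all integers
`k ≥ K`, all integers `j` with `1 ≤ j ≤ k-1`, and all reals `x` with `0 < x < 1`, one has
`binom(k,j)·x^j·(1-x)^{k-j} ≤ 1/e + ε`. -/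
theorem stmt_14 (ε : ℝ) (hε : 0 < ε) :
    ∃ K : ℕ, ∀ k : ℕ, K ≤ k → ∀ j : ℕ, 1 ≤ j → j ≤ k - 1 →
      ∀ x : ℝ, 0 < x → x < 1 →
        (k.choose j : ℝ) * x ^ j * (1 - x) ^ (k - j) ≤ (Real.exp 1)⁻¹ + ε := by
  obtain ⟨N, hN⟩ := exists_nat_gt (1 / ε)
  refine ⟨max 12 (N + 1), fun k hk j hj hjk x hx₀ hx₁ ↦ ?_⟩
  obtain ⟨m, rfl⟩ : ∃ m, k = j + m := ⟨k - j, by omega⟩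
  rw [Nat.add_sub_cancel_left]
  have hm : 0 < m := by omega
  have hN' : (N : ℝ) + 1 ≤ j + m := by exact_mod_cast (le_max_right _ _).trans hk
  calc ((j + m).choose j : ℝ) * x ^ j * (1 - x) ^ m
      ≤ bernsteinPeak j m := by
        rw [mul_assoc, bernsteinPeak, mul_assoc]
        exact mul_le_mul_of_nonneg_left (pow_mul_one_sub_pow_le hj hm hx₀.le hx₁.le) (by positivity)
    _ ≤ (exp 1)⁻¹ + 1 / (j + m - 1 : ℝ) := bernsteinPeak_le hj hm ((le_max_left _ _).trans hk)
    _ ≤ (exp 1)⁻¹ + ε := by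
        gcongr
        rw [one_div_le (by linarith [(one_div_pos.2 hε).trans hN]) hε]
        linarith
end

section
/- Let r, k and ℓ be positive integers, let c be a real number with 32²·r ≤ c < √k/2, and let G be a hypergraph on n ≥ k vertices all of whose edges are nonempty sets of size at most r. Set z = c/(32r) and p = 1 − 1/(8r). Then for every k-element subset A ⊆ V(G) with e(A) = ℓ and c ≤ m(A) ≤ √k/2 the following holds: if a random subset B ⊆ A is chosen by including each element of A independently with probability p, then with probability at least 1/4 the pair (A,B) is z-nice. -/
open scoped Classical

/-- A pair `(A,B)` with `B ⊆ A ⊆ V(G)` is `z`-nice if (i) `|A| = k` and `e(A) = ℓ`,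
(ii) `z ≤ h(A,B) ≤ √k/2`, (iii) `|A \ B| ≥ 2·√k·f(A,B)`, and (iv) `|A \ B| ≥ √k`. -/
def Nice {V : Type*} [DecidableEq V] (E : Finset (Finset V)) (k ℓ : ℕ) (z : ℝ)
    (A B : Finset V) : Prop :=
  B ⊆ A ∧ A.card = k ∧ hyperEdgesIn E A = ℓ ∧
    z ≤ (hyperH E A B : ℝ) ∧ (hyperH E A B : ℝ) ≤ Real.sqrt k / 2 ∧
    2 * Real.sqrt k * (hyperF E A B : ℝ) ≤ ((A \ B).card : ℝ) ∧
    Real.sqrt k ≤ ((A \ B).card : ℝ)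

/-!
Write `q = 1 - p = 1/(8r)`, let `M ⊆ A` be the set of non-isolated vertices, `m = |M|`, and
fix for every `v ∈ M` a witness edge `e_v ⊆ A` containing `v`. Sums over `A.powerset` weighted
by `subsetWeight A p` are expectations over the random subset `B`.

A vertex `v ∈ M \ B` is connected to `B` as soon as `e_v \ {v} ⊆ B`, so
`m(A,B) - h(A,B)` is at most the number `F` of `v ∈ M \ B` with `e_v \ {v} ⊄ B`. By Bernoulli's
inequality `𝔼 F ≤ m r q² = mq/8`, so Markov gives `F ≤ mq/4` with probability at least `1/2`.
Chebyshev gives `|M \ B| ≥ mq/2` and `|A \ B| ≥ kq/2`, each failing with probability at most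
`4/(mq) ≤ 1/32` resp. `4/(kq) ≤ 1/32`. On the intersection of these events (`B` is good),
which has probability at least `7/16`, `h(A,B) ≥ mq/4 ≥ cq/4 = z` and `f(A,B) ≤ F ≤ mq/4`;
the remaining conditions follow from `m ≤ √k/2` and `√k q ≥ 256`.
-/
section WeightedSums

open Finset

variable {ι : Type*} {s : Finset ι} {w : ι → ℝ}

theorem sum_filter_le_div_of_nonneg (hw : ∀ x ∈ s, 0 ≤ w x) {Y : ι → ℝ} (hY : ∀ x ∈ s, 0 ≤ Y x)
    {t : ℝ} (ht : 0 < t) :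
    ∑ x ∈ s with t ≤ Y x, w x ≤ (∑ x ∈ s, w x * Y x) / t := by
  rw [sum_filter, sum_div]
  refine sum_le_sum fun x hx => ?_
  split_ifs with htY
  · rw [le_div_iff₀ ht]
    exact mul_le_mul_of_nonneg_left htY (hw x hx)
  · exact div_nonneg (mul_nonneg (hw x hx) (hY x hx)) ht.le

theorem sum_filter_not_and_le (hw : ∀ x ∈ s, 0 ≤ w x) (P Q : ι → Prop) [DecidablePred P]
    [DecidablePred Q] :
    ∑ x ∈ s with ¬(P x ∧ Q x), w x ≤ (∑ x ∈ s with ¬P x, w x) + ∑ x ∈ s with ¬Q x, w x := by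
  classical
  simp_rw [not_and_or]
  rw [filter_or, ← sum_union_inter]
  exact le_add_of_nonneg_right
    (sum_nonneg fun x hx => hw x (filter_subset _ s (mem_inter.mp hx).1))

theorem sum_mul_card_filter {V : Type*} (M : Finset V) (P : V → ι → Prop)
    [∀ v x, Decidable (P v x)] :
    ∑ x ∈ s, w x * (M.filter (P · x)).card = ∑ v ∈ M, ∑ x ∈ s with P v x, w x := by
  simp only [card_filter, Nat.cast_sum, Nat.cast_ite, Nat.cast_one, Nat.cast_zero, mul_sum,
    mul_ite, mul_one, mul_zero, sum_filter]
  exact sum_comm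

end WeightedSums

section RandomSubset

open Finset

variable {V : Type*} [DecidableEq V]

def subsetWeight (A : Finset V) (p : ℝ) (B : Finset V) : ℝ :=
  p ^ B.card * (1 - p) ^ (A \ B).card

theorem subsetWeight_nonneg {p : ℝ} (hp0 : 0 ≤ p) (hp1 : p ≤ 1) (A B : Finset V) :
    0 ≤ subsetWeight A p B :=
  mul_nonneg (pow_nonneg hp0 _) (pow_nonneg (sub_nonneg.mpr hp1) _)

theorem sum_filter_subsetWeight_eq_sum_ite (A : Finset V) (p : ℝ) (P : Finset V → Prop)
    [DecidablePred P] :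
    ∑ B ∈ A.powerset with P B, subsetWeight A p B
      = ∑ B ∈ A.powerset, if P B then p ^ B.card * (1 - p) ^ (A.card - B.card) else 0 := by
  rw [sum_filter]
  refine sum_congr rfl fun B hB => ?_
  rw [subsetWeight, card_sdiff_of_subset (mem_powerset.mp hB)]

/-- Expand `∏ v ∈ A, (p + (1 - p))` after deleting the summand `1 - p` for `v ∈ S` and the
summand `p` for `v ∈ T`. -/
theorem sum_subsetWeight_filter_subset_disjoint {A S T : Finset V} (hS : S ⊆ A) (hT : T ⊆ A)
    (hST : Disjoint S T) (p : ℝ) :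
    ∑ B ∈ A.powerset with S ⊆ B ∧ Disjoint T B, subsetWeight A p B
      = p ^ S.card * (1 - p) ^ T.card := by
  have key := prod_add (fun v => if v ∉ T then p else 0) (fun v => if v ∉ S then 1 - p else 0) A
  have hfactor : ∀ v ∈ A, ((if v ∉ T then p else 0) + if v ∉ S then 1 - p else 0)
      = (if v ∈ S then p else 1) * (if v ∈ T then 1 - p else 1) := by
    intro v _
    by_cases hvS : v ∈ S
    · simp [hvS, disjoint_left.mp hST hvS]
    · by_cases hvT : v ∈ T <;> simp [hvS, hvT]
  rw [prod_congr rfl hfactor, prod_mul_distrib, prod_ite_mem, prod_ite_mem,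
    inter_eq_right.mpr hS, inter_eq_right.mpr hT, prod_const, prod_const] at key
  rw [key, sum_filter]
  refine sum_congr rfl fun B hB => ?_
  have hTB : (∀ v ∈ B, v ∉ T) ↔ Disjoint T B := disjoint_right.symm
  have hSB : (∀ v ∈ A \ B, v ∉ S) ↔ S ⊆ B := by
    constructor
    · intro h v hv
      by_contra hvB
      exact h v (mem_sdiff.mpr ⟨hS hv, hvB⟩) hv
    · intro h v hv hvS
      exact (mem_sdiff.mp hv).2 (h hvS)
  simp only [prod_ite_zero, prod_const, subsetWeight, hTB, hSB]
  by_cases h1 : S ⊆ B <;> by_cases h2 : Disjoint T B <;> simp [h1, h2]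

theorem sum_subsetWeight (A : Finset V) (p : ℝ) : ∑ B ∈ A.powerset, subsetWeight A p B = 1 := by
  simpa using sum_subsetWeight_filter_subset_disjoint (empty_subset A) (empty_subset A)
    (disjoint_empty_left ∅) p

theorem sum_subsetWeight_filter_notMem_subset {A D : Finset V} {v : V} (hD : D ⊆ A)
    (hv : v ∈ A) (hvD : v ∉ D) (p : ℝ) :
    ∑ B ∈ A.powerset with v ∉ B ∧ D ⊆ B, subsetWeight A p B = p ^ D.card * (1 - p) := by
  simpa [and_comm] using sum_subsetWeight_filter_subset_disjoint hD
    (singleton_subset_iff.mpr hv) (disjoint_singleton_right.mpr hvD) p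

theorem sum_subsetWeight_filter_notMem {A : Finset V} {v : V} (hv : v ∈ A) (p : ℝ) :
    ∑ B ∈ A.powerset with v ∉ B, subsetWeight A p B = 1 - p := by
  simpa using sum_subsetWeight_filter_notMem_subset (empty_subset A) hv (notMem_empty v) p

theorem sum_subsetWeight_filter_notMem_and_notMem {A : Finset V} {u v : V} (hu : u ∈ A)
    (hv : v ∈ A) (p : ℝ) :
    ∑ B ∈ A.powerset with u ∉ B ∧ v ∉ B, subsetWeight A p B
      = if u = v then 1 - p else (1 - p) ^ 2 := by
  split_ifs with huv
  · subst huv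
    simpa using sum_subsetWeight_filter_notMem hu p
  · simpa [card_pair huv, disjoint_insert_left] using sum_subsetWeight_filter_subset_disjoint
      (empty_subset A) (insert_subset hu (singleton_subset_iff.mpr hv)) (disjoint_empty_left _) p

theorem sum_subsetWeight_mul_card_sdiff {A M : Finset V} (hM : M ⊆ A) (p : ℝ) :
    ∑ B ∈ A.powerset, subsetWeight A p B * (M \ B).card = M.card * (1 - p) := by
  simp_rw [sdiff_eq_filter]
  rw [sum_mul_card_filter M (fun v B => v ∉ B),
    sum_congr rfl fun v hv => sum_subsetWeight_filter_notMem (hM hv) p, sum_const, nsmul_eq_mul]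

theorem sum_subsetWeight_mul_card_sdiff_sq {A M : Finset V} (hM : M ⊆ A) (p : ℝ) :
    ∑ B ∈ A.powerset, subsetWeight A p B * ((M \ B).card : ℝ) ^ 2
      = M.card ^ 2 * (1 - p) ^ 2 + M.card * (1 - p) * p := by
  have hsq : ∀ B : Finset V,
      ((M \ B).card : ℝ) ^ 2 = ((M ×ˢ M).filter (fun x => x.1 ∉ B ∧ x.2 ∉ B)).card := by
    intro B
    rw [filter_product (· ∉ B) (· ∉ B), card_product, ← sdiff_eq_filter]
    push_cast
    ring
  have hpair : ∀ x ∈ M ×ˢ M, ∑ B ∈ A.powerset with x.1 ∉ B ∧ x.2 ∉ B, subsetWeight A p B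
      = (1 - p) ^ 2 + if x.1 = x.2 then (1 - p) * p else 0 := by
    intro x hx
    obtain ⟨hx1, hx2⟩ := mem_product.mp hx
    rw [sum_subsetWeight_filter_notMem_and_notMem (hM hx1) (hM hx2)]
    split_ifs <;> ring
  simp_rw [hsq]
  rw [sum_mul_card_filter (M ×ˢ M) (fun x B => x.1 ∉ B ∧ x.2 ∉ B), sum_congr rfl hpair,
    sum_product]
  simp only [sum_add_distrib, sum_const, sum_ite_eq, sum_ite_mem, inter_self, nsmul_eq_mul]
  ring

theorem sum_subsetWeight_mul_card_sdiff_sub_sq {A M : Finset V} (hM : M ⊆ A) (p : ℝ) :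
    ∑ B ∈ A.powerset, subsetWeight A p B * ((M \ B).card - M.card * (1 - p)) ^ 2
      = M.card * (1 - p) * p := by
  have hexpand : ∀ B : Finset V,
      subsetWeight A p B * ((M \ B).card - M.card * (1 - p)) ^ 2
        = subsetWeight A p B * ((M \ B).card : ℝ) ^ 2
          - 2 * (M.card * (1 - p)) * (subsetWeight A p B * (M \ B).card)
          + (M.card * (1 - p)) ^ 2 * subsetWeight A p B := fun B => by ring
  simp_rw [hexpand]
  rw [sum_add_distrib, sum_sub_distrib, ← mul_sum, ← mul_sum,
    sum_subsetWeight_mul_card_sdiff_sq hM, sum_subsetWeight_mul_card_sdiff hM, sum_subsetWeight]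
  ring

theorem sum_subsetWeight_filter_card_sdiff_lt_le {A M : Finset V} (hM : M ⊆ A) {p : ℝ}
    (hp0 : 0 ≤ p) (hμ : 0 < M.card * (1 - p)) :
    ∑ B ∈ A.powerset with (M \ B).card < M.card * (1 - p) / 2, subsetWeight A p B
      ≤ 4 / (M.card * (1 - p)) := by
  set μ : ℝ := M.card * (1 - p)
  have hq : 0 < 1 - p := pos_of_mul_pos_right hμ (Nat.cast_nonneg _)
  have hw : ∀ B ∈ A.powerset, 0 ≤ subsetWeight A p B :=
    fun B _ => subsetWeight_nonneg hp0 (by linarith) A B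
  have hdev : ∀ B : Finset V, ((M \ B).card : ℝ) < μ / 2 →
      (μ / 2) ^ 2 ≤ ((M \ B).card - μ) ^ 2 := by
    intro B hB
    have : (0 : ℝ) ≤ (M \ B).card := Nat.cast_nonneg _
    nlinarith
  calc ∑ B ∈ A.powerset with (M \ B).card < μ / 2, subsetWeight A p B
      ≤ ∑ B ∈ A.powerset with (μ / 2) ^ 2 ≤ ((M \ B).card - μ) ^ 2, subsetWeight A p B :=
        sum_le_sum_of_subset_of_nonneg (monotone_filter_right _ fun B _ => hdev B)
          fun B hB _ => hw B (filter_subset _ _ hB)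
    _ ≤ (μ * p) / (μ / 2) ^ 2 := by
        rw [← sum_subsetWeight_mul_card_sdiff_sub_sq hM p]
        exact sum_filter_le_div_of_nonneg hw (fun B _ => sq_nonneg _) (by positivity)
    _ ≤ 4 / μ := by
        rw [div_le_div_iff₀ (by positivity) hμ]
        nlinarith

theorem one_sub_pow_le_mul {p : ℝ} (hp : -1 ≤ p) (n : ℕ) : 1 - p ^ n ≤ n * (1 - p) := by
  have := one_add_mul_le_pow (a := -(1 - p)) (by linarith) n
  rw [show 1 + -(1 - p) = p by ring] at this
  linarith

theorem sum_subsetWeight_mul_card_filter_not_subset_le {A M : Finset V} (hM : M ⊆ A)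
    {D : V → Finset V} (hDA : ∀ v ∈ M, D v ⊆ A) (hvD : ∀ v ∈ M, v ∉ D v) {d : ℕ}
    (hd : ∀ v ∈ M, (D v).card ≤ d) {p : ℝ} (hp0 : 0 ≤ p) (hp1 : p ≤ 1) :
    ∑ B ∈ A.powerset, subsetWeight A p B * (M.filter (fun v => v ∉ B ∧ ¬D v ⊆ B)).card
      ≤ M.card * d * (1 - p) ^ 2 := by
  have hterm : ∀ v ∈ M, ∑ B ∈ A.powerset with v ∉ B ∧ ¬D v ⊆ B, subsetWeight A p B
      ≤ d * (1 - p) ^ 2 := by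
    intro v hv
    have hsplit := sum_filter_add_sum_filter_not (A.powerset.filter (v ∉ ·)) (D v ⊆ ·)
      (subsetWeight A p)
    rw [filter_filter, filter_filter, sum_subsetWeight_filter_notMem (hM hv),
      sum_subsetWeight_filter_notMem_subset (hDA v hv) (hM hv) (hvD v hv)] at hsplit
    have hbern := one_sub_pow_le_mul (by linarith : -1 ≤ p) (D v).card
    have hDd : ((D v).card : ℝ) ≤ d := by exact_mod_cast hd v hv
    have hq : 0 ≤ 1 - p := by linarith
    calc ∑ B ∈ A.powerset with v ∉ B ∧ ¬D v ⊆ B, subsetWeight A p B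
        = (1 - p) * (1 - p ^ (D v).card) := by linarith
      _ ≤ (1 - p) * ((D v).card * (1 - p)) := mul_le_mul_of_nonneg_left hbern hq
      _ ≤ d * (1 - p) ^ 2 := by nlinarith
  rw [sum_mul_card_filter M (fun v B => v ∉ B ∧ ¬D v ⊆ B)]
  calc ∑ v ∈ M, ∑ B ∈ A.powerset with v ∉ B ∧ ¬D v ⊆ B, subsetWeight A p B
      ≤ ∑ v ∈ M, (d * (1 - p) ^ 2 : ℝ) := sum_le_sum hterm
    _ = M.card * d * (1 - p) ^ 2 := by rw [sum_const, nsmul_eq_mul]; ring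

theorem le_sum_subsetWeight_filter_good {A M : Finset V} (hM : M ⊆ A) {p : ℝ} (hp0 : 0 ≤ p)
    (hMq : 128 ≤ M.card * (1 - p)) (hAq : 128 ≤ A.card * (1 - p))
    {F : Finset V → ℝ} (hF0 : ∀ B, 0 ≤ F B)
    (hF : ∑ B ∈ A.powerset, subsetWeight A p B * F B ≤ M.card * (1 - p) / 8) :
    7 / 16 ≤ ∑ B ∈ A.powerset with M.card * (1 - p) / 2 ≤ (M \ B).card ∧
      A.card * (1 - p) / 2 ≤ (A \ B).card ∧ F B ≤ M.card * (1 - p) / 4, subsetWeight A p B := by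
  set μ : ℝ := M.card * (1 - p)
  have hw : ∀ B ∈ A.powerset, 0 ≤ subsetWeight A p B :=
    fun B _ => subsetWeight_nonneg hp0 (by nlinarith) A B
  have hcheb : ∀ N ⊆ A, 128 ≤ N.card * (1 - p) →
      ∑ B ∈ A.powerset with ¬N.card * (1 - p) / 2 ≤ (N \ B).card, subsetWeight A p B
        ≤ 1 / 32 := by
    intro N hN hNq
    simp only [not_le]
    refine (sum_subsetWeight_filter_card_sdiff_lt_le hN hp0 (by linarith)).trans ?_
    rw [div_le_div_iff₀ (by linarith) (by norm_num)]
    linarith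
  have hmarkov : ∑ B ∈ A.powerset with ¬F B ≤ μ / 4, subsetWeight A p B ≤ 1 / 2 :=
    calc ∑ B ∈ A.powerset with ¬F B ≤ μ / 4, subsetWeight A p B
        ≤ ∑ B ∈ A.powerset with μ / 4 ≤ F B, subsetWeight A p B :=
          sum_le_sum_of_subset_of_nonneg (monotone_filter_right _ fun B _ h => (not_le.mp h).le)
            fun B hB _ => hw B (filter_subset _ _ hB)
      _ ≤ (μ / 8) / (μ / 4) := by
          grw [sum_filter_le_div_of_nonneg hw (fun B _ => hF0 B) (by positivity), hF]
      _ = 1 / 2 := by field_simp; norm_num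
  have hbad := (sum_filter_not_and_le hw _ _).trans (add_le_add (hcheb M hM hMq)
    ((sum_filter_not_and_le hw _ _).trans (add_le_add (hcheb A subset_rfl hAq) hmarkov)))
  have htotal := sum_filter_add_sum_filter_not A.powerset
    (fun B => μ / 2 ≤ (M \ B).card ∧ A.card * (1 - p) / 2 ≤ (A \ B).card ∧ F B ≤ μ / 4)
    (subsetWeight A p)
  rw [sum_subsetWeight] at htotal
  linarith

end RandomSubset

section Hypergraph

open Finset

variable {V : Type*} [DecidableEq V] {E : Finset (Finset V)} {A B : Finset V}

variable (E A) in
def nonIsolated : Finset V :=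
  A.filter (fun v => ∃ e ∈ E, e ⊆ A ∧ v ∈ e)

theorem hyperM_eq_card_nonIsolated : hyperM E A = (nonIsolated E A).card := rfl

theorem hyperMAB_eq_card_nonIsolated_sdiff : hyperMAB E A B = (nonIsolated E A \ B).card := by
  unfold hyperMAB nonIsolated
  congr 1
  ext v
  simp only [mem_filter, mem_sdiff]
  tauto

theorem hyperH_le_hyperMAB (hBA : B ⊆ A) : hyperH E A B ≤ hyperMAB E A B := by
  refine card_le_card fun v hv => ?_
  obtain ⟨hvAB, e, he, hve, heB⟩ := mem_filter.mp hv
  refine mem_filter.mpr ⟨hvAB, e, he, fun x hx => ?_, hve⟩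
  by_cases hxv : x = v
  · exact hxv ▸ (mem_sdiff.mp hvAB).1
  · exact hBA (heB (mem_sdiff.mpr ⟨hx, notMem_singleton.mpr hxv⟩))

theorem hyperMAB_le_hyperH_add {ev : V → Finset V}
    (hev : ∀ v ∈ nonIsolated E A, ev v ∈ E ∧ v ∈ ev v) :
    hyperMAB E A B
      ≤ hyperH E A B + ((nonIsolated E A).filter (fun v => v ∉ B ∧ ¬ev v \ {v} ⊆ B)).card := by
  rw [hyperMAB_eq_card_nonIsolated_sdiff]
  refine (card_le_card fun v hv => ?_).trans (card_union_le _ _)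
  obtain ⟨hvM, hvB⟩ := mem_sdiff.mp hv
  by_cases hcon : ∃ e ∈ E, v ∈ e ∧ e \ {v} ⊆ B
  · exact mem_union_left _ (mem_filter.mpr ⟨mem_sdiff.mpr ⟨filter_subset _ _ hvM, hvB⟩, hcon⟩)
  · exact mem_union_right _
      (mem_filter.mpr ⟨hvM, hvB, fun h => hcon ⟨ev v, (hev v hvM).1, (hev v hvM).2, h⟩⟩)

theorem nice_of_good {ev : V → Finset V} (hev : ∀ v ∈ nonIsolated E A, ev v ∈ E ∧ v ∈ ev v)
    (hBA : B ⊆ A) {q z : ℝ} (hq : 0 ≤ q) (hz : z ≤ (nonIsolated E A).card * q / 4)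
    (hm : ((nonIsolated E A).card : ℝ) ≤ √A.card / 2) (hk : √A.card ≤ A.card * q / 2)
    (hgood : (nonIsolated E A).card * q / 2 ≤ (nonIsolated E A \ B).card ∧
      A.card * q / 2 ≤ (A \ B).card ∧
      (((nonIsolated E A).filter (fun v => v ∉ B ∧ ¬ev v \ {v} ⊆ B)).card : ℝ)
        ≤ (nonIsolated E A).card * q / 4) :
    Nice E A.card (hyperEdgesIn E A) z A B := by
  obtain ⟨hX, hAB, hF⟩ := hgood
  set M := nonIsolated E A
  have hHX : (hyperH E A B : ℝ) ≤ hyperMAB E A B := by exact_mod_cast hyperH_le_hyperMAB hBA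
  have hXHF : (hyperMAB E A B : ℝ)
      ≤ hyperH E A B + (M.filter (fun v => v ∉ B ∧ ¬ev v \ {v} ⊆ B)).card := by
    exact_mod_cast hyperMAB_le_hyperH_add hev
  have hXM : (hyperMAB E A B : ℝ) ≤ M.card := by
    rw [hyperMAB_eq_card_nonIsolated_sdiff]
    exact_mod_cast card_le_card sdiff_subset
  have hf : (hyperF E A B : ℝ) = hyperMAB E A B - hyperH E A B :=
    Nat.cast_sub (hyperH_le_hyperMAB hBA)
  rw [hyperMAB_eq_card_nonIsolated_sdiff] at hHX hXHF hXM hf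
  refine ⟨hBA, rfl, rfl, by linarith, by linarith, ?_, by linarith⟩
  have hfF : (hyperF E A B : ℝ) ≤ M.card * q / 4 := by linarith
  have hsqrt : √A.card * √A.card = A.card := Real.mul_self_sqrt (Nat.cast_nonneg _)
  nlinarith [mul_le_mul_of_nonneg_left hfF (Real.sqrt_nonneg A.card),
    mul_le_mul_of_nonneg_left hm (mul_nonneg (Real.sqrt_nonneg A.card) hq)]

theorem exists_witness_sum_subsetWeight_mul_card_le {r : ℕ} (hE : ∀ e ∈ E, e.card ≤ r) {p : ℝ}
    (hp0 : 0 ≤ p) (hp1 : p ≤ 1) :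
    ∃ ev : V → Finset V, (∀ v ∈ nonIsolated E A, ev v ∈ E ∧ v ∈ ev v) ∧
      ∑ B ∈ A.powerset, subsetWeight A p B *
          ((nonIsolated E A).filter (fun v => v ∉ B ∧ ¬ev v \ {v} ⊆ B)).card
        ≤ (nonIsolated E A).card * r * (1 - p) ^ 2 := by
  choose! ev hevE hevA hvev using fun v (hv : v ∈ nonIsolated E A) => (mem_filter.mp hv).2
  refine ⟨ev, fun v hv => ⟨hevE v hv, hvev v hv⟩, ?_⟩
  exact sum_subsetWeight_mul_card_filter_not_subset_le (filter_subset _ A)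
    (D := fun v => ev v \ {v}) (fun v hv => sdiff_subset.trans (hevA v hv)) (fun v _ => by simp)
    (fun v hv => (card_le_card sdiff_subset).trans (hE _ (hevE v hv))) hp0 hp1

end Hypergraph

theorem stmt_16_general (r k ℓ : ℕ) (hr : 1 ≤ r)
    (c : ℝ) (hc0 : 32 ^ 2 * (r : ℝ) ≤ c) (hc1 : c < Real.sqrt k / 2)
    (n : ℕ)
    (E : Finset (Finset (Fin n))) (hE : ∀ e ∈ E, e.Nonempty ∧ e.card ≤ r)
    (z : ℝ) (hz : z = c / (32 * (r : ℝ)))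
    (p : ℝ) (hp : p = 1 - 1 / (8 * (r : ℝ)))
    (A : Finset (Fin n)) (hA : A.card = k) (heA : hyperEdgesIn E A = ℓ)
    (hm1 : c ≤ (hyperM E A : ℝ)) (hm2 : (hyperM E A : ℝ) ≤ Real.sqrt k / 2) :
    (1 / 4 : ℝ) ≤ ∑ B ∈ A.powerset,
      (if Nice E k ℓ z A B then p ^ B.card * (1 - p) ^ (A.card - B.card) else 0) := by
  subst hA heA
  rw [hyperM_eq_card_nonIsolated] at hm1 hm2
  set M := nonIsolated E A
  have hMA : M ⊆ A := Finset.filter_subset _ A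
  have hq : 1 - p = 1 / (8 * r) := by rw [hp]; ring
  have hq0 : 0 < 1 - p := by rw [hq]; positivity
  have hrq : r * (1 - p) = 1 / 8 := by rw [hq]; field_simp
  have hp0 : 0 ≤ p := by nlinarith [(Nat.one_le_cast (α := ℝ)).mpr hr]
  have hMq : 128 ≤ M.card * (1 - p) := by
    nlinarith [mul_le_mul_of_nonneg_right (hc0.trans hm1) hq0.le]
  have hkq : √A.card ≤ A.card * (1 - p) / 2 := by
    nlinarith [Real.mul_self_sqrt (Nat.cast_nonneg (α := ℝ) A.card)]
  have hzM : z ≤ M.card * (1 - p) / 4 := by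
    rw [hz, show c / (32 * r) = c * (1 - p) / 4 by rw [hq]; field_simp; ring]
    gcongr
  obtain ⟨ev, hev, hF⟩ := exists_witness_sum_subsetWeight_mul_card_le
    (fun e he => (hE e he).2) hp0 (by linarith)
  have hgood := le_sum_subsetWeight_filter_good hMA hp0 hMq (by nlinarith)
    (fun B => Nat.cast_nonneg _) (hF.trans_eq (by linear_combination M.card * (1 - p) * hrq))
  rw [← sum_filter_subsetWeight_eq_sum_ite]
  calc (1 / 4 : ℝ) ≤ 7 / 16 := by norm_num
    _ ≤ _ := hgood
    _ ≤ _ := Finset.sum_le_sum_of_subset_of_nonneg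
        (Finset.monotone_filter_right _ fun B hB hgoodB =>
          nice_of_good hev (Finset.mem_powerset.mp hB) hq0.le hzM hm2 hkq hgoodB)
        fun B _ _ => subsetWeight_nonneg hp0 (by linarith) A B

/-- Theorem: let `r`, `k`, `ℓ` be positive integers, `c` a real with `32²·r ≤ c < √k/2`, and
`G` a hypergraph on `n ≥ k` vertices all of whose edges are nonempty sets of size at most
`r`. Set `z = c/(32r)` and `p = 1 - 1/(8r)`. Then for every `k`-element subset `A` with
`e(A) = ℓ` and `c ≤ m(A) ≤ √k/2`: if a random subset `B ⊆ A` is chosen by including each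
element of `A` independently with probability `p`, then with probability at least `1/4` the
pair `(A,B)` is `z`-nice. -/
theorem stmt_16 (r k ℓ : ℕ) (hr : 1 ≤ r) (hk : 1 ≤ k) (hℓ : 1 ≤ ℓ)
    (c : ℝ) (hc0 : 32 ^ 2 * (r : ℝ) ≤ c) (hc1 : c < Real.sqrt k / 2)
    (n : ℕ) (hn : k ≤ n)
    (E : Finset (Finset (Fin n))) (hE : ∀ e ∈ E, e.Nonempty ∧ e.card ≤ r)
    (z : ℝ) (hz : z = c / (32 * (r : ℝ)))
    (p : ℝ) (hp : p = 1 - 1 / (8 * (r : ℝ)))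
    (A : Finset (Fin n)) (hA : A.card = k) (heA : hyperEdgesIn E A = ℓ)
    (hm1 : c ≤ (hyperM E A : ℝ)) (hm2 : (hyperM E A : ℝ) ≤ Real.sqrt k / 2) :
    (1 / 4 : ℝ) ≤ ∑ B ∈ A.powerset,
      (if Nice E k ℓ z A B then p ^ B.card * (1 - p) ^ (A.card - B.card) else 0) :=
  stmt_16_general r k ℓ hr c hc0 hc1 n E hE z hz p hp A hA heA hm1 hm2
end

section
/- Let C ≥ 3 be a real number and let k be an integer with k ≥ 10³·C and k ≥ 4·(log k)^{10}. Let ℓ be an integer with √k ≤ ℓ ≤ C·k, and let G be a simple graph on n ≥ k vertices that has at least e^{-1}·n^k/k! different k-element vertex subsets A ⊆ V(G) with e(A) = ℓ. Then the number of vertices v ∈ V(G) with deg_G(v) ≤ 10C·n/k is at least n/12. -/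
open scoped Classical

/-- The number of edges of the simple graph `G` with both endpoints in `A`. -/
noncomputable def graphEdgesIn {V : Type*} (G : SimpleGraph V) (A : Finset V) : ℕ :=
  {e ∈ G.edgeSet | ∀ v ∈ e, v ∈ A}.ncard

/-- The degree of the vertex `v` in the simple graph `G`. -/
noncomputable def graphDeg {V : Type*} [Fintype V] (G : SimpleGraph V) (v : V) : ℕ :=
  (Finset.univ.filter (fun u => G.Adj v u)).card


open Finset
set_option maxHeartbeats 1600000

lemma aux_pow_self_le : ∀ m : ℕ, (m:ℝ)^m ≤ Real.exp 1 ^ m * m.factorial := by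
  intro m
  induction m with
  | zero => simp
  | succ m ih =>
    rcases Nat.eq_zero_or_pos m with hm | hm
    · subst hm
      have h := Real.add_one_le_exp (1:ℝ)
      norm_num
      try linarith
    have hmpos : (0:ℝ) < m := by exact_mod_cast hm
    have h1 : ((m:ℝ)+1)^m ≤ Real.exp 1 * (m:ℝ)^m := by
      have : ((m:ℝ)+1)^m = ((1 + 1/m) * m)^m := by field_simp
      rw [this, mul_pow]
      have h2 : (1 + 1/(m:ℝ))^m ≤ Real.exp (1/m) ^ m := by
        apply pow_le_pow_left₀ (by positivity)
        linarith [Real.add_one_le_exp (1/(m:ℝ))]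
      have h3 : Real.exp (1/(m:ℝ)) ^ m = Real.exp 1 := by
        rw [← Real.exp_nat_mul]
        congr 1; field_simp
      calc ((1 + 1/(m:ℝ))^m) * (m:ℝ)^m ≤ Real.exp (1/m) ^ m * (m:ℝ)^m := by
            apply mul_le_mul_of_nonneg_right h2 (by positivity)
        _ = Real.exp 1 * (m:ℝ)^m := by rw [h3]
    have : ((m:ℝ)+1)^(m+1) = ((m:ℝ)+1)^m * ((m:ℝ)+1) := by ring
    push_cast
    rw [this]
    calc ((m:ℝ)+1)^m * ((m:ℝ)+1) ≤ Real.exp 1 * (m:ℝ)^m * ((m:ℝ)+1) := by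
          apply mul_le_mul_of_nonneg_right h1 (by positivity)
      _ ≤ Real.exp 1 * (Real.exp 1 ^ m * m.factorial) * ((m:ℝ)+1) := by
          apply mul_le_mul_of_nonneg_right _ (by positivity)
          apply mul_le_mul_of_nonneg_left _ (Real.exp_pos 1).le
          exact_mod_cast ih
      _ = Real.exp 1 ^ (m+1) * (m.factorial * ((m:ℝ)+1)) := by ring
      _ = Real.exp 1 ^ (m+1) * ((m+1).factorial) := by
          congr 1
          rw [Nat.factorial_succ]
          push_cast; ring

lemma aux_log_le {t : ℝ} (ht : 0 < t) : Real.log t ≤ t / Real.exp 1 := by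
  have h := Real.log_le_sub_one_of_pos (show (0:ℝ) < t / Real.exp 1 by positivity)
  rw [Real.log_div (ne_of_gt ht) (ne_of_gt (Real.exp_pos 1)), Real.log_exp] at h
  linarith

lemma aux_markov {α : Type*} (s : Finset α) (w : α → ℕ) (t : ℝ) :
    t * ((s.filter (fun a => t ≤ (w a : ℝ))).card : ℝ) ≤ ∑ a ∈ s, (w a : ℝ) := by
  calc t * ((s.filter (fun a => t ≤ (w a : ℝ))).card : ℝ)
      = ∑ _a ∈ s.filter (fun a => t ≤ (w a : ℝ)), t := by
        rw [Finset.sum_const, nsmul_eq_mul, mul_comm]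
    _ ≤ ∑ a ∈ s.filter (fun a => t ≤ (w a : ℝ)), (w a : ℝ) := by
        apply Finset.sum_le_sum; intro a ha
        exact (Finset.mem_filter.mp ha).2
    _ ≤ ∑ a ∈ s, (w a : ℝ) := by
        apply Finset.sum_le_sum_of_subset_of_nonneg (Finset.filter_subset _ _)
        intro a _ _; positivity

lemma aux_double_count {V : Type*} [Fintype V] [DecidableEq V]
    (s : Finset (Finset V)) (p : V → Finset V → Prop) [∀ v A, Decidable (p v A)] :
    ∑ A ∈ s, (A.filter (fun v => p v A)).card
      = ∑ v : V, (s.filter (fun A => v ∈ A ∧ p v A)).card := by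
  have h1 : ∀ A ∈ s, (A.filter (fun v => p v A)).card
      = ∑ v : V, if v ∈ A ∧ p v A then 1 else 0 := by
    intro A _
    rw [← Finset.card_filter]
    congr 1
    ext v
    simp [Finset.mem_filter, and_comm]
  rw [Finset.sum_congr rfl h1, Finset.sum_comm]
  apply Finset.sum_congr rfl
  intro v _
  rw [← Finset.card_filter]

lemma aux_handshake {n : ℕ} (G : SimpleGraph (Fin n)) (A : Finset (Fin n)) :
    ∑ v ∈ A, (A.filter (fun u => G.Adj v u)).card = 2 * graphEdgesIn G A := by
  set G' : SimpleGraph (Fin n) :=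
    { Adj := fun v u => v ∈ A ∧ u ∈ A ∧ G.Adj v u
      symm := by constructor; intro v u h; exact ⟨h.2.1, h.1, h.2.2.symm⟩
      loopless := by constructor; intro v h; exact G.loopless.irrefl v h.2.2 } with hG'
  have hadj : ∀ v u, G'.Adj v u ↔ (v ∈ A ∧ u ∈ A ∧ G.Adj v u) := fun v u => Iff.rfl
  have hedge : graphEdgesIn G A = G'.edgeFinset.card := by
    rw [SimpleGraph.edgeFinset, ← Set.ncard_eq_toFinset_card']
    unfold graphEdgesIn
    congr 1
    ext e
    induction e with
    | _ a b =>
      simp only [SimpleGraph.mem_edgeSet, Set.mem_setOf_eq, Set.mem_sep_iff, Sym2.mem_iff, hadj]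
      constructor
      · rintro ⟨hab, hmem⟩
        exact ⟨hmem a (Or.inl rfl), hmem b (Or.inr rfl), hab⟩
      · rintro ⟨ha, hb, hab⟩
        refine ⟨hab, ?_⟩
        rintro v (rfl | rfl) <;> assumption
  have hdeg : ∀ v, G'.degree v = if v ∈ A then (A.filter (fun u => G.Adj v u)).card else 0 := by
    intro v
    rw [SimpleGraph.degree]
    by_cases hv : v ∈ A
    · simp only [hv, if_true]
      congr 1
      ext u
      simp [SimpleGraph.mem_neighborFinset, hadj, hv, and_comm]
    · simp only [hv, if_false]
      rw [Finset.card_eq_zero]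
      ext u
      simp [SimpleGraph.mem_neighborFinset, hadj, hv]
  have hsum := SimpleGraph.sum_degrees_eq_twice_card_edges G'
  rw [hedge, ← hsum]
  rw [Finset.sum_congr rfl (fun v _ => hdeg v)] at *
  rw [Finset.sum_ite_mem, Finset.univ_inter]

lemma aux_card_contain {α : Type*} [Fintype α] [DecidableEq α] (v : α) (k : ℕ) (hk : 1 ≤ k) :
    (((Finset.powersetCard k (univ : Finset α)).filter (fun A => v ∈ A)).card)
      = (Fintype.card α - 1).choose (k - 1) := by
  have h0 : Fintype.card α - 1 = (univ.erase v).card := by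
    rw [Finset.card_erase_of_mem (Finset.mem_univ v), Finset.card_univ]
  rw [h0, ← Finset.card_powersetCard]
  apply Finset.card_bij' (fun A _ => A.erase v) (fun B _ => insert v B)
  · intro A hA
    simp only [Finset.mem_filter] at hA
    exact Finset.insert_erase hA.2
  · intro B hB
    rw [Finset.mem_powersetCard] at hB
    have hvB : v ∉ B := fun h => (Finset.mem_erase.mp (hB.1 h)).1 rfl
    exact Finset.erase_insert hvB
  · intro A hA
    simp only [Finset.mem_filter, Finset.mem_powersetCard] at hA
    obtain ⟨⟨hsub, hcard⟩, hv⟩ := hA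
    rw [Finset.mem_powersetCard]
    constructor
    · intro u hu
      rw [Finset.mem_erase] at hu ⊢
      exact ⟨hu.1, hsub hu.2⟩
    · rw [Finset.card_erase_of_mem hv, hcard]
  · intro B hB
    rw [Finset.mem_powersetCard] at hB
    obtain ⟨hsub, hcard⟩ := hB
    have hvB : v ∉ B := fun h => (Finset.mem_erase.mp (hsub h)).1 rfl
    simp only [Finset.mem_filter, Finset.mem_powersetCard]
    refine ⟨⟨Finset.subset_univ _, ?_⟩, Finset.mem_insert_self v B⟩
    rw [Finset.card_insert_of_notMem hvB, hcard]
    omega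

lemma aux_choose_id (n k : ℕ) (hk : 1 ≤ k) (hn : 1 ≤ n) :
    n * (n-1).choose (k-1) = k * n.choose k := by
  obtain ⟨n', rfl⟩ : ∃ n', n = n' + 1 := ⟨n - 1, by omega⟩
  obtain ⟨k', rfl⟩ : ∃ k', k = k' + 1 := ⟨k - 1, by omega⟩
  have h := Nat.add_one_mul_choose_eq n' k'
  simp only [Nat.add_sub_cancel]
  rw [mul_comm (k'+1)]
  exact h

-- geometric sum bound
lemma aux_geom (t : ℕ) : ∑ i ∈ range t, ((1:ℝ)/2)^i ≤ 2 := by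
  rw [geom_sum_eq (by norm_num : (1:ℝ)/2 ≠ 1)]
  have h : (0:ℝ) ≤ ((1:ℝ)/2)^t := by positivity
  have h2 : ((1:ℝ)/2)^t ≤ 1 := by
    apply pow_le_one₀ <;> norm_num
  rw [div_le_iff_of_neg (by norm_num : (1:ℝ)/2 - 1 < 0)]
  linarith

lemma aux_choose_le_pow_div (a j : ℕ) : (a.choose j : ℝ) ≤ (a:ℝ)^j / j.factorial := by
  rw [le_div_iff₀ (by positivity : (0:ℝ) < (j.factorial:ℝ))]
  have h : (a.choose j) * j.factorial ≤ a ^ j := by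
    calc a.choose j * j.factorial = j.factorial * a.choose j := mul_comm _ _
      _ = a.descFactorial j := (Nat.descFactorial_eq_factorial_mul_choose a j).symm
      _ ≤ a ^ j := Nat.descFactorial_le_pow a j
  exact_mod_cast h

lemma aux_choose_ge (n k : ℕ) (hk : k ≤ n) (hk1 : 1 ≤ k) :
    ((n:ℝ)-k)^(k-1) / (k-1).factorial ≤ ((n-1).choose (k-1) : ℝ) := by
  rw [div_le_iff₀ (by positivity : (0:ℝ) < ((k-1).factorial:ℝ))]
  have h : (n-k)^(k-1) ≤ (n-1).descFactorial (k-1) := by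
    rw [Nat.descFactorial_eq_prod_range]
    calc (n-k)^(k-1) = ∏ _i ∈ range (k-1), (n-k) := by rw [Finset.prod_const, Finset.card_range]
      _ ≤ ∏ i ∈ range (k-1), (n - 1 - i) := by
          apply Finset.prod_le_prod'
          intro i hi
          rw [Finset.mem_range] at hi
          omega
  have h2 : ((n-1).descFactorial (k-1) : ℝ) = ((n-1).choose (k-1) : ℝ) * (k-1).factorial := by
    rw [Nat.descFactorial_eq_factorial_mul_choose]
    push_cast; ring
  have h3 : (((n-k:ℕ)):ℝ) = (n:ℝ) - k := by
    push_cast [Nat.cast_sub hk]; ring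
  calc ((n:ℝ)-k)^(k-1) = (((n-k:ℕ)):ℝ)^(k-1) := by rw [h3]
    _ ≤ ((n-1).descFactorial (k-1) : ℝ) := by exact_mod_cast h
    _ = ((n-1).choose (k-1) : ℝ) * (k-1).factorial := h2

lemma aux_desc_le (n k : ℕ) (hk : k ≤ n) (hn : 0 < n) :
    (n.descFactorial k : ℝ) ≤ (n:ℝ)^k * Real.exp (-((k:ℝ)*((k:ℝ)-1)/(2*n))) := by
  have hgauss : ∀ m : ℕ, (∑ i ∈ range m, (i:ℝ)) = (m:ℝ)*((m:ℝ)-1)/2 := by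
    intro m
    induction m with
    | zero => simp
    | succ m ih => rw [Finset.sum_range_succ, ih]; push_cast; ring
  have hsum : ∑ i ∈ range k, ((i:ℝ)/n) = (k:ℝ)*((k:ℝ)-1)/(2*n) := by
    rw [← Finset.sum_div, hgauss]
    ring
  have hprod : (n.descFactorial k : ℝ) = ∏ i ∈ range k, (((n - i : ℕ)):ℝ) := by
    rw [Nat.descFactorial_eq_prod_range]
    push_cast
    rfl
  rw [hprod, ← hsum]
  have hstep : ∀ i ∈ range k, (((n - i : ℕ)):ℝ) ≤ (n:ℝ) * Real.exp (-((i:ℝ)/n)) := by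
    intro i hi
    rw [Finset.mem_range] at hi
    have hin : i ≤ n := le_of_lt (lt_of_lt_of_le hi hk)
    have h1 : (((n - i : ℕ)):ℝ) = (n:ℝ) - i := by push_cast [Nat.cast_sub hin]; ring
    rw [h1]
    have h2 : (1:ℝ) - (i:ℝ)/n ≤ Real.exp (-((i:ℝ)/n)) := by
      linarith [Real.add_one_le_exp (-((i:ℝ)/n))]
    have hnpos : (0:ℝ) < n := by exact_mod_cast hn
    calc (n:ℝ) - i = n * (1 - (i:ℝ)/n) := by field_simp
      _ ≤ n * Real.exp (-((i:ℝ)/n)) := by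
          apply mul_le_mul_of_nonneg_left h2 hnpos.le
  calc ∏ i ∈ range k, (((n - i : ℕ)):ℝ)
      ≤ ∏ i ∈ range k, ((n:ℝ) * Real.exp (-((i:ℝ)/n))) := by
        apply Finset.prod_le_prod
        · intro i _; positivity
        · exact hstep
    _ = (n:ℝ)^k * Real.exp (-(∑ i ∈ range k, ((i:ℝ)/n))) := by
        rw [Finset.prod_mul_distrib, Finset.prod_const, Finset.card_range,
          ← Real.exp_sum]
        congr 1
        rw [← Finset.sum_neg_distrib]

lemma aux_fiber {α : Type*} [Fintype α] [DecidableEq α] (v : α) (N : Finset α) (hvN : v ∉ N)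
    (k j : ℕ) :
    (((Finset.powersetCard k (univ : Finset α)).filter
        (fun A => v ∈ A ∧ (A.filter (fun u => u ∈ N)).card = j)).card : ℕ)
      ≤ N.card.choose j * (Fintype.card α - 1 - N.card).choose (k - 1 - j) := by
  classical
  have hcard2 : ((univ : Finset α) \ insert v N).card = Fintype.card α - 1 - N.card := by
    rw [Finset.card_sdiff_of_subset (Finset.subset_univ _), Finset.card_univ,
      Finset.card_insert_of_notMem hvN]
    omega
  have hrhs : N.card.choose j * (Fintype.card α - 1 - N.card).choose (k - 1 - j)
      = ((Finset.powersetCard j N) ×ˢ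
         (Finset.powersetCard (k - 1 - j) ((univ : Finset α) \ insert v N))).card := by
    rw [Finset.card_product, Finset.card_powersetCard, Finset.card_powersetCard, hcard2]
  rw [hrhs]
  apply Finset.card_le_card_of_injOn
    (fun A => (A.filter (fun u => u ∈ N), (A.erase v).filter (fun u => u ∉ N)))
  · intro A hA
    simp only [Finset.mem_coe, Finset.mem_filter, Finset.mem_powersetCard] at hA
    obtain ⟨⟨hsub, hcard⟩, hvA, hj⟩ := hA
    have hPv : v ∉ A.filter (fun u => u ∈ N) := by
      simp [hvN]
    have hfe : (A.erase v).filter (fun u => u ∈ N) = A.filter (fun u => u ∈ N) := by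
      ext u
      simp only [Finset.mem_filter, Finset.mem_erase]
      constructor
      · rintro ⟨⟨_, hu⟩, hN⟩; exact ⟨hu, hN⟩
      · rintro ⟨hu, hN⟩
        exact ⟨⟨fun h => hvN (h ▸ hN), hu⟩, hN⟩
    have hsplit : ((A.erase v).filter (fun u => u ∈ N)).card
        + ((A.erase v).filter (fun u => ¬ u ∈ N)).card = (A.erase v).card :=
      Finset.card_filter_add_card_filter_not _
    rw [hfe, hj, Finset.card_erase_of_mem hvA, hcard] at hsplit
    rw [Finset.mem_coe, Finset.mem_product]
    dsimp only
    constructor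
    · rw [Finset.mem_powersetCard]
      refine ⟨?_, hj⟩
      intro u hu
      exact (Finset.mem_filter.mp hu).2
    · rw [Finset.mem_powersetCard]
      constructor
      · intro u hu
        simp only [Finset.mem_filter, Finset.mem_erase] at hu
        simp only [Finset.mem_sdiff, Finset.mem_univ, Finset.mem_insert, true_and]
        push_neg
        exact ⟨hu.1.1, hu.2⟩
      · omega
  · intro A hA B hB heq
    simp only [Finset.coe_filter, Set.mem_setOf_eq, Finset.mem_powersetCard] at hA hB
    obtain ⟨_, hvA, _⟩ := hA
    obtain ⟨_, hvB, _⟩ := hB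
    simp only [Prod.mk.injEq] at heq
    have key : ∀ (X : Finset α), v ∈ X →
        X = insert v ((X.filter (fun u => u ∈ N)) ∪ ((X.erase v).filter (fun u => u ∉ N))) := by
      intro X hvX
      have h1 : X.filter (fun u => u ∈ N) = (X.erase v).filter (fun u => u ∈ N) := by
        ext u
        simp only [Finset.mem_filter, Finset.mem_erase]
        constructor
        · rintro ⟨hu, hN⟩
          exact ⟨⟨fun h => hvN (h ▸ hN), hu⟩, hN⟩
        · rintro ⟨⟨_, hu⟩, hN⟩; exact ⟨hu, hN⟩
      rw [h1, Finset.filter_union_filter_not_eq, Finset.insert_erase hvX]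
    rw [key A hvA, key B hvB, heq.1, heq.2]
lemma aux_sum_phi (C : ℝ) (hC : 3 ≤ C) (k n d m : ℕ)
    (hk3000 : 3000 ≤ (k:ℝ)) (hkC : 1000*C ≤ (k:ℝ)) (hkn : k ≤ n)
    (hnB : (k:ℝ)*((k:ℝ)-1)/2.001 < (n:ℝ))
    (hdn : d ≤ n - 1) (hd : 10*C*(n:ℝ)/(k:ℝ) < (d:ℝ))
    (hm : m = Nat.floor (4*C)) :
    ∑ j ∈ range (m+1), ((d.choose j : ℝ) * ((n-1-d).choose (k-1-j) : ℝ))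
      ≤ 2 * Real.exp (2.004 - 2.27391*C) * ((n-1).choose (k-1) : ℝ) := by
  have hkR0 : (0:ℝ) < k := by linarith
  have hk1n : (1:ℕ) ≤ k := by exact_mod_cast Nat.one_le_iff_ne_zero.mpr (by
    intro h; rw [h] at hk3000; norm_num at hk3000)
  have hnR : (k:ℝ) ≤ (n:ℝ) := by exact_mod_cast hkn
  have hnB' : (k:ℝ)*((k:ℝ)-1) < 2.001*(n:ℝ) := by
    rw [div_lt_iff₀ (by norm_num : (0:ℝ) < 2.001)] at hnB
    linarith
  have hnk0 : (0:ℝ) < (n:ℝ) - k := by nlinarith only [hnB', hk3000, hnR]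
  set nk : ℝ := (n:ℝ) - k with hnk
  have hn1 : (1:ℕ) ≤ n := le_trans hk1n hkn
  have hkn2 : (k:ℝ)^2 ≤ 2.004 * nk := by
    simp only [hnk]
    nlinarith only [hnB', hk3000]
  -- m facts
  have hm4C : (m:ℝ) ≤ 4*C := by rw [hm]; exact Nat.floor_le (by linarith)
  have hm12 : (12:ℕ) ≤ m := by rw [hm]; exact Nat.le_floor (by push_cast; linarith)
  have hm12R : (12:ℝ) ≤ (m:ℝ) := by exact_mod_cast hm12
  have hmkR : 250*(m:ℝ) ≤ (k:ℝ) := by nlinarith only [hm4C, hkC, hC]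
  have hmk1 : m + 1 ≤ k := by
    have : (m:ℝ) + 1 ≤ (k:ℝ) := by nlinarith only [hm4C, hkC, hC]
    exact_mod_cast this
  have hmk1' : m ≤ k - 1 := by omega
  -- d facts
  have hd0 : (0:ℝ) < (d:ℝ) := by
    have : (0:ℝ) < 10*C*(n:ℝ)/(k:ℝ) := by positivity
    linarith
  have hdn' : (d:ℝ) ≤ (n:ℝ) - 1 := by
    have h1 : (d:ℝ) ≤ ((n-1:ℕ):ℝ) := by exact_mod_cast hdn
    rwa [Nat.cast_sub hn1, Nat.cast_one] at h1
  set bR : ℝ := (n:ℝ) - 1 - d with hbR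
  have hbR0 : (0:ℝ) ≤ bR := by simp only [hbR]; linarith
  have hbcast : (((n-1-d : ℕ)):ℝ) = bR := by
    have : n - 1 - d = n - 1 - d := rfl
    rw [Nat.cast_sub hdn, Nat.cast_sub hn1]
    push_cast; ring
  set x : ℝ := (d:ℝ)/nk with hxdef
  set y : ℝ := bR/nk with hydef
  have hx0 : (0:ℝ) < x := by positivity
  have hy0 : (0:ℝ) ≤ y := by positivity
  set q : ℝ := ((k:ℝ)-1)*x with hqdef
  have hq0 : (0:ℝ) < q := by
    apply mul_pos (by linarith) hx0
  have hnnk : nk ≤ (n:ℝ) := by simp only [hnk]; linarith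
  have hdk : 10*C*(n:ℝ) ≤ (d:ℝ)*(k:ℝ) := by
    rw [div_lt_iff₀ hkR0] at hd
    linarith
  have hxlb : 10*C*(n:ℝ)/((k:ℝ)*nk) ≤ x := by
    rw [hxdef, div_le_div_iff₀ (by positivity) hnk0]
    nlinarith only [mul_le_mul_of_nonneg_right hdk hnk0.le]
  have hq995 : 9.99*C ≤ q := by
    have h1 : ((k:ℝ)-1) * (10*C*(n:ℝ)/((k:ℝ)*nk)) ≤ q := by
      apply mul_le_mul_of_nonneg_left hxlb (by linarith)
    have h2 : 9.99*C ≤ ((k:ℝ)-1) * (10*C*(n:ℝ)/((k:ℝ)*nk)) := by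
      rw [mul_div_assoc', le_div_iff₀ (by positivity)]
      have hCn0 : (0:ℝ) ≤ C * (n:ℝ) := by positivity
      have hk10 : (0:ℝ) ≤ 0.01*(k:ℝ) - 10 := by linarith
      have hA : 9.99*C*((k:ℝ)*nk) ≤ 9.99*C*((k:ℝ)*(n:ℝ)) := by
        have : (0:ℝ) ≤ 9.99*C*(k:ℝ) := by positivity
        nlinarith only [mul_le_mul_of_nonneg_left hnnk this]
      have hB : 9.99*C*((k:ℝ)*(n:ℝ)) ≤ ((k:ℝ)-1)*(10*C*(n:ℝ)) := by
        nlinarith only [mul_nonneg hCn0 hk10]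
      linarith
    linarith
  set φ : ℕ → ℝ := fun j => ((k-1).choose j : ℝ) * x^j * y^(k-1-j) with hφ
  have hφ0 : ∀ j, 0 ≤ φ j := by
    intro j; simp only [hφ]; positivity
  -- per-j bound
  have hperj : ∀ j ∈ range (m+1),
      (d.choose j : ℝ) * ((n-1-d).choose (k-1-j) : ℝ) ≤ ((n-1).choose (k-1) : ℝ) * φ j := by
    intro j hj
    rw [Finset.mem_range] at hj
    have hjm : j ≤ m := by omega
    have hjk : j ≤ k - 1 := le_trans hjm hmk1'
    set r : ℕ := k - 1 - j with hr
    have hjr : j + r = k - 1 := by omega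
    have a1 := aux_choose_le_pow_div d j
    have a2 : ((n-1-d).choose r : ℝ) ≤ bR^r / r.factorial := by
      have := aux_choose_le_pow_div (n-1-d) r
      rwa [hbcast] at this
    have a3 := aux_choose_ge n k hkn hk1n
    have a4 : ((k-1).choose j : ℝ) * (j.factorial : ℝ) * (r.factorial : ℝ)
        = ((k-1).factorial : ℝ) := by
      have := Nat.choose_mul_factorial_mul_factorial hjk
      have hreq : (k-1) - j = r := rfl
      rw [hreq] at this
      exact_mod_cast this
    have hchoosepos : (0:ℝ) < ((k-1).choose j : ℝ) := by
      exact_mod_cast Nat.choose_pos hjk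
    have hnkpow : nk^(k-1) = nk^j * nk^r := by
      rw [← pow_add, hjr]
    have e1 : (d.choose j : ℝ) * ((n-1-d).choose r : ℝ)
        ≤ ((d:ℝ)^j/j.factorial) * (bR^r/r.factorial) := by
      apply mul_le_mul a1 a2 (by positivity) (by positivity)
    have e2 : ((d:ℝ)^j/j.factorial) * (bR^r/r.factorial)
        = ((k-1).choose j : ℝ) * (d:ℝ)^j * bR^r / ((k-1).factorial : ℝ) := by
      rw [← a4]
      field_simp
    have e3 : ((k-1).choose j : ℝ) * (d:ℝ)^j * bR^r / ((k-1).factorial : ℝ)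
        = (nk^(k-1) / ((k-1).factorial : ℝ)) * φ j := by
      simp only [hφ, hxdef, hydef]
      rw [div_pow, div_pow, hnkpow]
      have hnkj : nk^j ≠ 0 := by positivity
      have hnkr : nk^r ≠ 0 := by positivity
      field_simp
      ring
    have e4 : (nk^(k-1) / ((k-1).factorial : ℝ)) * φ j ≤ ((n-1).choose (k-1) : ℝ) * φ j := by
      apply mul_le_mul_of_nonneg_right a3 (hφ0 j)
    calc (d.choose j : ℝ) * ((n-1-d).choose r : ℝ)
        ≤ ((d:ℝ)^j/j.factorial) * (bR^r/r.factorial) := e1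
      _ = ((k-1).choose j : ℝ) * (d:ℝ)^j * bR^r / ((k-1).factorial : ℝ) := e2
      _ = (nk^(k-1) / ((k-1).factorial : ℝ)) * φ j := e3
      _ ≤ ((n-1).choose (k-1) : ℝ) * φ j := e4
  -- geometric step
  have hstep : ∀ j, j + 1 ≤ m → 2 * φ j ≤ φ (j+1) := by
    intro j hjm
    have hjk : j + 1 ≤ k - 1 := le_trans hjm hmk1'
    have hjkR : (j:ℝ) + 1 ≤ (k:ℝ) - 1 := by
      have h := hjk
      have : ((j+1:ℕ):ℝ) ≤ ((k-1:ℕ):ℝ) := by exact_mod_cast h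
      rwa [Nat.cast_add, Nat.cast_one, Nat.cast_sub hk1n, Nat.cast_one] at this
    -- scalar inequality : 2*(j+1)*y ≤ (k-1-j)*x
    have hscal : 2*((j:ℝ)+1)*y ≤ ((k:ℝ)-1-(j:ℝ))*x := by
      set t : ℝ := (n:ℝ)/((k:ℝ)*nk) with htdef
      have ht0 : 0 < t := by positivity
      have hy_ub : y ≤ (k:ℝ)*t := by
        have h1 : (k:ℝ)*t = (n:ℝ)/nk := by
          rw [htdef]; field_simp
        rw [h1, hydef, div_le_div_iff₀ hnk0 hnk0]
        have hbn : bR ≤ (n:ℝ) := by simp only [hbR]; linarith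
        nlinarith only [mul_le_mul_of_nonneg_right hbn hnk0.le]
      have hx_lb : 10*C*t ≤ x := by
        have : 10*C*t = 10*C*(n:ℝ)/((k:ℝ)*nk) := by rw [htdef]; ring
        rw [this]; exact hxlb
      have hj4C : (j:ℝ) + 1 ≤ 4*C := by
        have : ((j:ℝ)+1) ≤ (m:ℝ) := by exact_mod_cast hjm
        linarith
      have hkj : (k:ℝ) - 4*C ≤ (k:ℝ)-1-(j:ℝ) := by linarith
      have hC0 : (0:ℝ) < C := by linarith
      have h1 : 2*((j:ℝ)+1)*y ≤ 8*C*((k:ℝ)*t) := by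
        have s1 : 2*((j:ℝ)+1)*y ≤ 8*C*y := by
          nlinarith only [mul_nonneg hy0 (show (0:ℝ) ≤ 8*C - 2*((j:ℝ)+1) by linarith [hj4C])]
        have s2 : 8*C*y ≤ 8*C*((k:ℝ)*t) := by
          apply mul_le_mul_of_nonneg_left hy_ub (by linarith : (0:ℝ) ≤ 8*C)
        linarith
      have h2 : ((k:ℝ)-4*C) * (10*C*t) ≤ ((k:ℝ)-1-(j:ℝ))*x := by
        apply mul_le_mul hkj hx_lb (by positivity) (by linarith)
      have h3 : 8*C*((k:ℝ)*t) ≤ ((k:ℝ)-4*C) * (10*C*t) := by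
        nlinarith only [mul_nonneg (mul_nonneg hC0.le ht0.le) (show (0:ℝ) ≤ 2*(k:ℝ) - 40*C by linarith [hkC, hC])]
      linarith
    -- convert to φ step
    have hrr : k - 1 - j = (k - 1 - (j+1)) + 1 := by omega
    have hchid : ((k-1).choose (j+1) : ℝ) * ((j:ℝ)+1) = ((k-1).choose j : ℝ) * ((k:ℝ)-1-(j:ℝ)) := by
      have h := Nat.choose_succ_right_eq (k-1) j
      have h' : (((k-1).choose (j+1) : ℝ)) * (((j+1:ℕ)):ℝ)
          = ((k-1).choose j : ℝ) * ((((k-1) - j : ℕ)):ℝ) := by exact_mod_cast h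
      have hc : ((((k-1) - j : ℕ)):ℝ) = (k:ℝ)-1-(j:ℝ) := by
        rw [Nat.cast_sub (by omega : j ≤ k-1), Nat.cast_sub hk1n]
        push_cast; ring
      rw [hc] at h'
      have hc2 : (((j+1:ℕ)):ℝ) = (j:ℝ)+1 := by push_cast; ring
      rw [hc2] at h'
      exact h'
    have hxpow : x^(j+1) = x^j * x := by ring
    have hypow : y^(k-1-j) = y^(k-1-(j+1)) * y := by
      rw [hrr]; ring
    have hcj0 : (0:ℝ) ≤ ((k-1).choose j : ℝ) := by positivity
    have hcj10 : (0:ℝ) ≤ ((k-1).choose (j+1) : ℝ) := by positivity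
    have hfac0 : (0:ℝ) ≤ x^j * y^(k-1-(j+1)) := by positivity
    -- 2 * C_j * y ≤ C_{j+1} * x   (after multiplying scalar ineq appropriately)
    have hkey : 2 * ((k-1).choose j : ℝ) * y * ((j:ℝ)+1) ≤ ((k-1).choose (j+1) : ℝ) * x * ((j:ℝ)+1) := by
      have hmul := mul_le_mul_of_nonneg_left hscal hcj0
      calc 2 * ((k-1).choose j : ℝ) * y * ((j:ℝ)+1)
          = ((k-1).choose j : ℝ) * (2*((j:ℝ)+1)*y) := by ring
        _ ≤ ((k-1).choose j : ℝ) * (((k:ℝ)-1-(j:ℝ))*x) := hmul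
        _ = ((k-1).choose j : ℝ) * ((k:ℝ)-1-(j:ℝ)) * x := by ring
        _ = ((k-1).choose (j+1) : ℝ) * ((j:ℝ)+1) * x := by rw [← hchid]
        _ = ((k-1).choose (j+1) : ℝ) * x * ((j:ℝ)+1) := by ring
    have hj1pos : (0:ℝ) < (j:ℝ)+1 := by positivity
    have hkey2 : 2 * ((k-1).choose j : ℝ) * y ≤ ((k-1).choose (j+1) : ℝ) * x :=
      le_of_mul_le_mul_right (by linarith [hkey]) hj1pos
    calc 2 * φ j = (2 * ((k-1).choose j : ℝ) * y) * (x^j * y^(k-1-(j+1))) := by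
          simp only [hφ]; rw [hypow]; ring
      _ ≤ (((k-1).choose (j+1) : ℝ) * x) * (x^j * y^(k-1-(j+1))) := by
          apply mul_le_mul_of_nonneg_right hkey2 hfac0
      _ = φ (j+1) := by simp only [hφ]; rw [hxpow]; ring
  -- φ (m - i) ≤ φ m / 2^i
  have hgeo : ∀ i, i ≤ m → φ (m - i) ≤ φ m / 2^i := by
    intro i
    induction i with
    | zero => intro _; simp
    | succ i ih =>
      intro hi
      have h1 : 2 * φ (m - (i+1)) ≤ φ (m - (i+1) + 1) := hstep _ (by omega)
      have h2 : m - (i+1) + 1 = m - i := by omega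
      rw [h2] at h1
      have h3 : φ (m - i) ≤ φ m / 2^i := ih (by omega)
      have h4 : φ (m - (i+1)) ≤ φ (m-i) / 2 := by linarith
      calc φ (m - (i+1)) ≤ (φ m / 2^i) / 2 := by
            apply le_trans h4; apply div_le_div_of_nonneg_right h3 (by norm_num)
        _ = φ m / 2^(i+1) := by rw [pow_succ]; ring
  have hsumφ : ∑ j ∈ range (m+1), φ j ≤ 2 * φ m := by
    have hterm : ∀ j ∈ range (m+1), φ j ≤ φ m * ((1:ℝ)/2)^(m-j) := by
      intro j hj
      rw [Finset.mem_range] at hj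
      have hjm : j ≤ m := by omega
      have h1 := hgeo (m - j) (by omega)
      have h2 : m - (m - j) = j := by omega
      rw [h2] at h1
      calc φ j ≤ φ m / 2^(m-j) := h1
        _ = φ m * ((1:ℝ)/2)^(m-j) := by rw [div_pow, one_pow]; ring
    have hr2 : ∑ j ∈ range (m+1), ((1:ℝ)/2)^(m-j) = ∑ j ∈ range (m+1), ((1:ℝ)/2)^j := by
      have := Finset.sum_range_reflect (fun i => ((1:ℝ)/2)^i) (m+1)
      simpa using this
    calc ∑ j ∈ range (m+1), φ j ≤ ∑ j ∈ range (m+1), φ m * ((1:ℝ)/2)^(m-j) :=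
          Finset.sum_le_sum hterm
      _ = φ m * ∑ j ∈ range (m+1), ((1:ℝ)/2)^(m-j) := by rw [Finset.mul_sum]
      _ = φ m * ∑ j ∈ range (m+1), ((1:ℝ)/2)^j := by rw [hr2]
      _ ≤ φ m * 2 := mul_le_mul_of_nonneg_left (aux_geom (m+1)) (hφ0 m)
      _ = 2 * φ m := by ring
  -- bound φ m
  have hφm : φ m ≤ Real.exp (2.004 - 2.27391*C) := by
    set δ : ℝ := ((k:ℝ)-1)/nk with hδ
    have hδ0 : 0 ≤ δ := by
      apply div_nonneg (by linarith) hnk0.le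
    have hyδ : y = (δ - x) + 1 := by
      simp only [hydef, hxdef, hδ, hbR]
      field_simp
      ring
    have hyexp : y ≤ Real.exp (δ - x) := by
      rw [hyδ]; exact Real.add_one_le_exp (δ - x)
    have hkmR : (((k-1-m : ℕ)):ℝ) = (k:ℝ)-1-(m:ℝ) := by
      rw [Nat.cast_sub (by omega : m ≤ k - 1), Nat.cast_sub hk1n]
      push_cast; ring
    have hypow : y^(k-1-m) ≤ Real.exp ((δ - x) * ((k:ℝ)-1-(m:ℝ))) := by
      calc y^(k-1-m) ≤ (Real.exp (δ - x))^(k-1-m) := by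
            apply pow_le_pow_left₀ hy0 hyexp
        _ = Real.exp ((δ - x) * ((k-1-m : ℕ):ℝ)) := by
            rw [← Real.exp_nat_mul]; ring_nf
        _ = Real.exp ((δ - x) * ((k:ℝ)-1-(m:ℝ))) := by rw [hkmR]
    have hchm : ((k-1).choose m : ℝ) ≤ ((k:ℝ)-1)^m / m.factorial := by
      have := aux_choose_le_pow_div (k-1) m
      have hc : (((k-1:ℕ)):ℝ) = (k:ℝ)-1 := by
        rw [Nat.cast_sub hk1n]; push_cast; ring
      rwa [hc] at this
    have hmpos : (0:ℝ) < (m:ℝ) := by linarith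
    have hmpow : (0:ℝ) < (m:ℝ)^m := pow_pos hmpos m
    have hmfac : ((k:ℝ)-1)^m / m.factorial ≤ ((k:ℝ)-1)^m * (Real.exp 1)^m / (m:ℝ)^m := by
      have hp := aux_pow_self_le m
      rw [div_le_div_iff₀ (by exact_mod_cast Nat.factorial_pos m : (0:ℝ) < (m.factorial:ℝ)) hmpow]
      calc ((k:ℝ)-1)^m * (m:ℝ)^m ≤ ((k:ℝ)-1)^m * ((Real.exp 1)^m * m.factorial) := by
            apply mul_le_mul_of_nonneg_left hp (pow_nonneg (by linarith) m)
        _ = ((k:ℝ)-1)^m * (Real.exp 1)^m * m.factorial := by ring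
    have hk1R : (0:ℝ) ≤ (k:ℝ)-1 := by linarith
    have hRHS1 : (0:ℝ) ≤ ((k:ℝ)-1)^m * (Real.exp 1)^m / (m:ℝ)^m :=
      div_nonneg (mul_nonneg (pow_nonneg hk1R m) (pow_nonneg (Real.exp_pos 1).le m)) hmpow.le
    have hφm1 : φ m ≤ (Real.exp 1 * q / m)^m * Real.exp ((δ - x) * ((k:ℝ)-1-(m:ℝ))) := by
      have h1 : φ m ≤ (((k:ℝ)-1)^m * (Real.exp 1)^m / (m:ℝ)^m) * x^m
          * Real.exp ((δ - x) * ((k:ℝ)-1-(m:ℝ))) := by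
        simp only [hφ]
        apply mul_le_mul
        · apply mul_le_mul (le_trans hchm hmfac) le_rfl (by positivity) hRHS1
        · exact hypow
        · positivity
        · exact mul_nonneg hRHS1 (by positivity)
      have h2 : (((k:ℝ)-1)^m * (Real.exp 1)^m / (m:ℝ)^m) * x^m = (Real.exp 1 * q / m)^m := by
        rw [hqdef]
        simp only [div_pow, mul_pow]
        ring
      rw [h2] at h1
      exact h1
    set A : ℝ := Real.exp 1 * q / m with hAdef
    have hA0 : 0 < A := by positivity
    have hpowexp : A^m = Real.exp ((m:ℝ) * Real.log A) := by
      have h := Real.exp_nat_mul (Real.log A) m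
      rw [Real.exp_log hA0] at h
      exact h.symm
    have hlog : Real.log A = 1 + Real.log (q/m) := by
      rw [hAdef, mul_div_assoc, Real.log_mul (ne_of_gt (Real.exp_pos 1)) (by positivity),
        Real.log_exp]
    have hlogle : Real.log (q/m) ≤ (q/m) / Real.exp 1 := aux_log_le (by positivity)
    have hexpinv : (1:ℝ)/Real.exp 1 ≤ 0.36788 := by
      rw [div_le_iff₀ (Real.exp_pos 1)]
      nlinarith only [Real.exp_one_gt_d9]
    -- exponent bound
    have hexpbound : (m:ℝ) * Real.log A + (δ - x) * ((k:ℝ)-1-(m:ℝ))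
        ≤ 2.004 - 2.27391*C := by
      have hmq : (m:ℝ) * Real.log A ≤ (m:ℝ) + q / Real.exp 1 := by
        rw [hlog]
        have h1 : (m:ℝ) * Real.log (q/m) ≤ (m:ℝ) * ((q/m)/Real.exp 1) :=
          mul_le_mul_of_nonneg_left hlogle hmpos.le
        have h2 : (m:ℝ) * ((q/m)/Real.exp 1) = q / Real.exp 1 := by
          field_simp
        linarith [h1, h2.le, h2.ge]
      have hqe : q / Real.exp 1 ≤ 0.36788 * q := by
        calc q / Real.exp 1 = q * (1/Real.exp 1) := by ring
          _ ≤ q * 0.36788 := by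
              apply mul_le_mul_of_nonneg_left hexpinv hq0.le
          _ = 0.36788 * q := by ring
      have hδterm : δ * ((k:ℝ)-1-(m:ℝ)) ≤ 2.004 := by
        have h1 : δ * ((k:ℝ)-1-(m:ℝ)) ≤ δ * ((k:ℝ)-1) := by
          apply mul_le_mul_of_nonneg_left (by linarith) hδ0
        have h2 : δ * ((k:ℝ)-1) ≤ (k:ℝ)^2/nk := by
          rw [hδ, div_mul_eq_mul_div, div_le_div_iff₀ hnk0 hnk0]
          nlinarith only [mul_nonneg (show (0:ℝ) ≤ 2*(k:ℝ) - 1 by linarith [hk3000]) hnk0.le]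
        have h3 : (k:ℝ)^2/nk ≤ 2.004 := by
          rw [div_le_iff₀ hnk0]; linarith
        linarith
      have hxterm : 0.9959 * q ≤ x * ((k:ℝ)-1-(m:ℝ)) := by
        have hk1pos : (0:ℝ) < (k:ℝ)-1 := by linarith
        have h1 : x * ((k:ℝ)-1-(m:ℝ)) = q * (1 - (m:ℝ)/((k:ℝ)-1)) := by
          rw [hqdef]
          field_simp
        have h2 : (m:ℝ)/((k:ℝ)-1) ≤ 0.0041 := by
          rw [div_le_iff₀ hk1pos]
          linarith
        rw [h1]
        nlinarith only [mul_nonneg hq0.le (show (0:ℝ) ≤ 0.0041 - (m:ℝ)/((k:ℝ)-1) by linarith [h2])]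
      have hfin : (m:ℝ) + 0.36788*q + 2.004 - 0.9959*q ≤ 2.004 - 2.27391*C := by
        linarith [hq995, hm4C]
      have hsplit : (δ - x) * ((k:ℝ)-1-(m:ℝ))
          = δ * ((k:ℝ)-1-(m:ℝ)) - x * ((k:ℝ)-1-(m:ℝ)) := by ring
      calc (m:ℝ) * Real.log A + (δ - x) * ((k:ℝ)-1-(m:ℝ))
          ≤ ((m:ℝ) + q/Real.exp 1) + (δ * ((k:ℝ)-1-(m:ℝ)) - x * ((k:ℝ)-1-(m:ℝ))) := by
            rw [hsplit] at *
            linarith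
        _ ≤ (m:ℝ) + 0.36788*q + 2.004 - 0.9959*q := by linarith
        _ ≤ 2.004 - 2.27391*C := hfin
    calc φ m ≤ A^m * Real.exp ((δ - x) * ((k:ℝ)-1-(m:ℝ))) := hφm1
      _ = Real.exp ((m:ℝ) * Real.log A + (δ - x) * ((k:ℝ)-1-(m:ℝ))) := by
          rw [hpowexp, ← Real.exp_add]
      _ ≤ Real.exp (2.004 - 2.27391*C) := Real.exp_le_exp.mpr hexpbound
  -- put together
  calc ∑ j ∈ range (m+1), ((d.choose j : ℝ) * ((n-1-d).choose (k-1-j) : ℝ))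
      ≤ ∑ j ∈ range (m+1), ((n-1).choose (k-1) : ℝ) * φ j := Finset.sum_le_sum hperj
    _ = ((n-1).choose (k-1) : ℝ) * ∑ j ∈ range (m+1), φ j := by rw [Finset.mul_sum]
    _ ≤ ((n-1).choose (k-1) : ℝ) * (2 * φ m) := by
        apply mul_le_mul_of_nonneg_left hsumφ (by positivity)
    _ ≤ ((n-1).choose (k-1) : ℝ) * (2 * Real.exp (2.004 - 2.27391*C)) := by
        apply mul_le_mul_of_nonneg_left (by linarith [hφm]) (by positivity)
    _ = 2 * Real.exp (2.004 - 2.27391*C) * ((n-1).choose (k-1) : ℝ) := by ring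
lemma aux_tail {n : ℕ} (G : SimpleGraph (Fin n)) (C : ℝ) (hC : 3 ≤ C) (k : ℕ)
    (hk3000 : 3000 ≤ (k:ℝ)) (hkC : 1000*C ≤ (k:ℝ)) (hkn : k ≤ n)
    (hnB : (k:ℝ)*((k:ℝ)-1)/2.001 < (n:ℝ)) (v : Fin n)
    (hd : 10*C*(n:ℝ)/(k:ℝ) < ((Finset.univ.filter (fun u => G.Adj v u)).card : ℝ)) :
    (((Finset.powersetCard k (univ : Finset (Fin n))).filter
        (fun A => v ∈ A ∧ ((A.filter (fun u => G.Adj v u)).card : ℝ) < 4*C)).card : ℝ)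
      ≤ 2 * Real.exp (2.004 - 2.27391*C) * (((n-1).choose (k-1)) : ℝ) := by
  classical
  set N : Finset (Fin n) := Finset.univ.filter (fun u => G.Adj v u) with hN
  set d : ℕ := N.card with hdeq
  have hvN : v ∉ N := by
    simp only [hN, Finset.mem_filter]
    rintro ⟨-, h⟩
    exact G.loopless.irrefl v h
  have hmemN : ∀ u, u ∈ N ↔ G.Adj v u := by
    intro u; simp [hN]
  have hpred : ∀ A : Finset (Fin n), A.filter (fun u => G.Adj v u)
      = A.filter (fun u => u ∈ N) := by
    intro A
    apply Finset.filter_congr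
    intro u _
    simp [hmemN u]
  set m : ℕ := Nat.floor (4*C) with hm
  set T := (Finset.powersetCard k (univ : Finset (Fin n))).filter
      (fun A => v ∈ A ∧ ((A.filter (fun u => G.Adj v u)).card : ℝ) < 4*C) with hT
  have hfib : T.card = ∑ j ∈ range (m+1),
      (T.filter (fun A => (A.filter (fun u => u ∈ N)).card = j)).card := by
    apply Finset.card_eq_sum_card_fiberwise
    intro A hA
    rw [Finset.mem_coe, hT, Finset.mem_filter] at hA
    obtain ⟨-, -, hlt⟩ := hA
    simp only [Finset.mem_coe]
    rw [Finset.mem_range, Nat.lt_succ_iff, ← hpred A]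
    apply Nat.le_floor
    exact le_of_lt hlt
  have hdn : d ≤ n - 1 := by
    have hsub : N ⊆ Finset.univ.erase v := by
      intro u hu
      rw [Finset.mem_erase]
      exact ⟨fun h => hvN (h ▸ hu), Finset.mem_univ u⟩
    calc d ≤ (Finset.univ.erase v).card := Finset.card_le_card hsub
      _ = n - 1 := by rw [Finset.card_erase_of_mem (Finset.mem_univ v), Finset.card_univ,
        Fintype.card_fin]
  have hfibj : ∀ j, (T.filter (fun A => (A.filter (fun u => u ∈ N)).card = j)).card
      ≤ d.choose j * (n-1-d).choose (k-1-j) := by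
    intro j
    have hsub : T.filter (fun A => (A.filter (fun u => u ∈ N)).card = j)
        ⊆ (Finset.powersetCard k (univ : Finset (Fin n))).filter
          (fun A => v ∈ A ∧ (A.filter (fun u => u ∈ N)).card = j) := by
      intro A hA
      rw [Finset.mem_filter] at hA
      obtain ⟨hAT, hAj⟩ := hA
      rw [hT, Finset.mem_filter] at hAT
      rw [Finset.mem_filter]
      exact ⟨hAT.1, hAT.2.1, hAj⟩
    calc (T.filter (fun A => (A.filter (fun u => u ∈ N)).card = j)).card
        ≤ _ := Finset.card_le_card hsub
      _ ≤ N.card.choose j * (Fintype.card (Fin n) - 1 - N.card).choose (k - 1 - j) :=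
          aux_fiber v N hvN k j
      _ = d.choose j * (n-1-d).choose (k-1-j) := by rw [Fintype.card_fin]
  have hcast : (T.card : ℝ) ≤ ∑ j ∈ range (m+1), ((d.choose j : ℝ) * ((n-1-d).choose (k-1-j) : ℝ)) := by
    rw [hfib]
    push_cast
    apply Finset.sum_le_sum
    intro j _
    exact_mod_cast hfibj j
  calc (T.card : ℝ) ≤ _ := hcast
    _ ≤ 2 * Real.exp (2.004 - 2.27391*C) * (((n-1).choose (k-1)) : ℝ) :=
        aux_sum_phi C hC k n d m hk3000 hkC hkn hnB hdn hd hm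
/-- Theorem: let `C ≥ 3` be a real and `k` an integer with `k ≥ 10³·C` and
`k ≥ 4·(log k)^{10}` (logarithm to base 2). Let `ℓ` be an integer with `√k ≤ ℓ ≤ C·k`, and
`G` a simple graph on `n ≥ k` vertices having at least `e^{-1}·n^k/k!` different `k`-element
vertex subsets `A` with `e(A) = ℓ`. Then the number of vertices `v` with
`deg_G(v) ≤ 10C·n/k` is at least `n/12`. -/
theorem stmt_18 (C : ℝ) (hC : 3 ≤ C) (k : ℕ) (hk1 : 10 ^ 3 * C ≤ (k : ℝ))
    (hk2 : 4 * (Real.logb 2 (k : ℝ)) ^ 10 ≤ (k : ℝ))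
    (ℓ : ℕ) (hℓ1 : Real.sqrt k ≤ (ℓ : ℝ)) (hℓ2 : (ℓ : ℝ) ≤ C * (k : ℝ))
    (n : ℕ) (hn : k ≤ n) (G : SimpleGraph (Fin n))
    (hG : (Real.exp 1)⁻¹ * (n : ℝ) ^ k / (k.factorial : ℝ) ≤
      ({A : Finset (Fin n) | A.card = k ∧ graphEdgesIn G A = ℓ}.ncard : ℝ)) :
    (n : ℝ) / 12 ≤
      ({v : Fin n | (graphDeg G v : ℝ) ≤ 10 * C * (n : ℝ) / (k : ℝ)}.ncard : ℝ) := by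
  classical
  by_contra hcon
  push_neg at hcon
  -- basic numeric facts
  have hC0 : (0:ℝ) < C := by linarith
  have hkC : 1000*C ≤ (k:ℝ) := by norm_num at hk1; linarith
  have hk3000 : (3000:ℝ) ≤ (k:ℝ) := by linarith
  have hk3000n : 3000 ≤ k := by exact_mod_cast hk3000
  have hk1n : 1 ≤ k := by omega
  have hn1 : 1 ≤ n := le_trans hk1n hn
  have hkR0 : (0:ℝ) < (k:ℝ) := by linarith
  have hnR0 : (0:ℝ) < (n:ℝ) := by
    have : (k:ℝ) ≤ (n:ℝ) := by exact_mod_cast hn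
    linarith
  have hfacpos : (0:ℝ) < (k.factorial : ℝ) := by exact_mod_cast k.factorial_pos
  have hnkpos : (0:ℝ) < (n:ℝ)^k / k.factorial := by positivity
  -- the low-degree vertex set as a Finset
  set S : Finset (Fin n) := univ.filter (fun v => (graphDeg G v : ℝ) ≤ 10*C*(n:ℝ)/(k:ℝ))
    with hSdef
  have hScard : ({v : Fin n | (graphDeg G v : ℝ) ≤ 10 * C * (n : ℝ) / (k : ℝ)}.ncard : ℝ)
      = (S.card : ℝ) := by
    congr 1
    rw [Set.ncard_eq_toFinset_card', Set.toFinset_setOf]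
  have hS : (S.card : ℝ) < (n:ℝ)/12 := by rw [hScard] at hcon; exact hcon
  -- the family of good sets as a Finset
  set NN : Finset (Finset (Fin n)) :=
    univ.filter (fun A : Finset (Fin n) => A.card = k ∧ graphEdgesIn G A = ℓ) with hNNdef
  have hNN : (Real.exp 1)⁻¹ * (n : ℝ) ^ k / (k.factorial : ℝ) ≤ (NN.card : ℝ) := by
    have : ({A : Finset (Fin n) | A.card = k ∧ graphEdgesIn G A = ℓ}.ncard : ℕ) = NN.card := by
      rw [Set.ncard_eq_toFinset_card', Set.toFinset_setOf]
    rw [this] at hG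
    exact hG
  -- NN lives in the powersetCard
  set P : Finset (Finset (Fin n)) := Finset.powersetCard k (univ : Finset (Fin n)) with hPdef
  have hPcard : P.card = n.choose k := by
    rw [hPdef, Finset.card_powersetCard, Finset.card_univ, Fintype.card_fin]
  have hNNP : NN ⊆ P := by
    intro A hA
    rw [hNNdef, Finset.mem_filter] at hA
    rw [hPdef, Finset.mem_powersetCard]
    exact ⟨Finset.subset_univ _, hA.2.1⟩
  have hchoosefac : ((n.choose k : ℝ)) * (k.factorial : ℝ) = (n.descFactorial k : ℝ) := by
    rw [Nat.descFactorial_eq_factorial_mul_choose]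
    push_cast
    ring
  have hexpinvle : (Real.exp 1)⁻¹ ≤ 0.367880 := by
    rw [inv_le_comm₀ (Real.exp_pos 1) (by norm_num)]
    nlinarith [Real.exp_one_gt_d9]
  have hexpinvge : (0.367879:ℝ) ≤ (Real.exp 1)⁻¹ := by
    rw [le_inv_comm₀ (by norm_num) (Real.exp_pos 1)]
    nlinarith [Real.exp_one_lt_d9]
  by_cases hcase : (n:ℝ) ≤ (k:ℝ)*((k:ℝ)-1)/2.001
  · -- small n : even the total number of k-sets is too small
    have h1 : (NN.card : ℝ) ≤ (n.choose k : ℝ) := by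
      have := Finset.card_le_card hNNP
      rw [hPcard] at this
      exact_mod_cast this
    have hexpo : (1.0005:ℝ) ≤ (k:ℝ)*((k:ℝ)-1)/(2*(n:ℝ)) := by
      rw [le_div_iff₀ (by positivity)]
      have h2 : 2.001*(n:ℝ) ≤ (k:ℝ)*((k:ℝ)-1) := by
        rw [le_div_iff₀ (by norm_num : (0:ℝ) < 2.001)] at hcase
        linarith
      linarith
    have h3 : (n.descFactorial k : ℝ) ≤ (n:ℝ)^k * Real.exp (-(1.0005:ℝ)) := by
      calc (n.descFactorial k : ℝ) ≤ (n:ℝ)^k * Real.exp (-((k:ℝ)*((k:ℝ)-1)/(2*(n:ℝ)))) :=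
            aux_desc_le n k hn (by omega)
        _ ≤ (n:ℝ)^k * Real.exp (-(1.0005:ℝ)) := by
            apply mul_le_mul_of_nonneg_left _ (by positivity)
            apply Real.exp_le_exp.mpr
            linarith
    have h4 : (n.choose k : ℝ) ≤ (n:ℝ)^k * Real.exp (-(1.0005:ℝ)) / (k.factorial : ℝ) := by
      rw [le_div_iff₀ hfacpos, hchoosefac]
      exact h3
    have h5 : Real.exp (-(1.0005:ℝ)) < (Real.exp 1)⁻¹ := by
      rw [← Real.exp_neg]
      apply Real.exp_lt_exp.mpr
      norm_num
    have h6 : (NN.card : ℝ) < (Real.exp 1)⁻¹ * (n:ℝ)^k / (k.factorial : ℝ) := by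
      calc (NN.card : ℝ) ≤ (n:ℝ)^k * Real.exp (-(1.0005:ℝ)) / (k.factorial : ℝ) :=
            le_trans h1 h4
        _ < (Real.exp 1)⁻¹ * (n:ℝ)^k / (k.factorial : ℝ) := by
            rw [div_lt_div_iff₀ hfacpos hfacpos]
            nlinarith only [mul_lt_mul_of_pos_right h5
              (mul_pos (pow_pos hnR0 k) hfacpos), hnR0, hfacpos]
    linarith
  · push_neg at hcase
    have hnB : (k:ℝ)*((k:ℝ)-1)/2.001 < (n:ℝ) := hcase
    set c1 : ℕ := (n-1).choose (k-1) with hc1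
    have hnc1 : (n:ℝ) * (c1:ℝ) = (k:ℝ) * (n.choose k : ℝ) := by
      have := aux_choose_id n k hk1n hn1
      exact_mod_cast this
    set bad1 := P.filter (fun A => (k:ℝ)/3 ≤ (((A.filter (fun u => u ∈ S)).card : ℕ) : ℝ))
      with hbad1
    set bad2 := P.filter (fun A => (k:ℝ)/6 ≤
        (((A.filter (fun u => u ∉ S ∧
          (((A.filter (fun w => G.Adj u w)).card : ℕ) : ℝ) < 4*C)).card : ℕ) : ℝ)) with hbad2
    -- every good set is bad1 or bad2
    have hsub : NN ⊆ bad1 ∪ bad2 := by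
      intro A hA
      rw [hNNdef, Finset.mem_filter] at hA
      obtain ⟨-, hAk, hAe⟩ := hA
      have hAP : A ∈ P := by
        rw [hPdef, Finset.mem_powersetCard]
        exact ⟨Finset.subset_univ _, hAk⟩
      by_cases hb1 : (k:ℝ)/3 ≤ (((A.filter (fun u => u ∈ S)).card : ℕ) : ℝ)
      · exact Finset.mem_union_left _ (Finset.mem_filter.mpr ⟨hAP, hb1⟩)
      · push_neg at hb1
        have hhand := aux_handshake G A
        rw [hAe] at hhand
        have hsum : ∑ v ∈ A, (((A.filter (fun u => G.Adj v u)).card : ℕ) : ℝ) = 2*(ℓ:ℝ) := by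
          rw [← Nat.cast_sum, hhand]
          push_cast
          ring
        have hmark := aux_markov A (fun v => (A.filter (fun u => G.Adj v u)).card) (4*C)
        rw [hsum] at hmark
        have hℓCk : 2*(ℓ:ℝ) ≤ 2*C*(k:ℝ) := by linarith
        have hhigh : (((A.filter (fun v => 4*C ≤
            (((A.filter (fun u => G.Adj v u)).card : ℕ) : ℝ))).card : ℕ) : ℝ) ≤ (k:ℝ)/2 := by
          by_contra hcon2
          push_neg at hcon2
          have h1 := mul_lt_mul_of_pos_left hcon2 (show (0:ℝ) < 4*C by linarith)
          linarith [hmark, h1]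
        have hcover : A ⊆ (A.filter (fun u => u ∉ S ∧
              (((A.filter (fun w => G.Adj u w)).card : ℕ) : ℝ) < 4*C))
            ∪ ((A.filter (fun u => u ∈ S))
              ∪ (A.filter (fun v => 4*C ≤ (((A.filter (fun u => G.Adj v u)).card : ℕ) : ℝ)))) := by
          intro u hu
          by_cases h1 : u ∈ S
          · exact Finset.mem_union_right _ (Finset.mem_union_left _
              (Finset.mem_filter.mpr ⟨hu, h1⟩))
          by_cases h2 : 4*C ≤ (((A.filter (fun w => G.Adj u w)).card : ℕ) : ℝ)
          · exact Finset.mem_union_right _ (Finset.mem_union_right _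
              (Finset.mem_filter.mpr ⟨hu, h2⟩))
          · push_neg at h2
            exact Finset.mem_union_left _ (Finset.mem_filter.mpr ⟨hu, h1, h2⟩)
        have hcard : A.card ≤ (A.filter (fun u => u ∉ S ∧
              (((A.filter (fun w => G.Adj u w)).card : ℕ) : ℝ) < 4*C)).card
            + ((A.filter (fun u => u ∈ S)).card
              + (A.filter (fun v => 4*C ≤
                (((A.filter (fun u => G.Adj v u)).card : ℕ) : ℝ))).card) := by
          calc A.card ≤ _ := Finset.card_le_card hcover
            _ ≤ _ := Finset.card_union_le _ _
            _ ≤ _ := by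
                have := Finset.card_union_le (A.filter (fun u => u ∈ S))
                  (A.filter (fun v => 4*C ≤ (((A.filter (fun u => G.Adj v u)).card : ℕ) : ℝ)))
                omega
        have hZ : (k:ℝ)/6 ≤ (((A.filter (fun u => u ∉ S ∧
            (((A.filter (fun w => G.Adj u w)).card : ℕ) : ℝ) < 4*C)).card : ℕ) : ℝ) := by
          have hcardR := hcard
          rw [hAk] at hcardR
          have hcastR : (k:ℝ) ≤ (((A.filter (fun u => u ∉ S ∧
              (((A.filter (fun w => G.Adj u w)).card : ℕ) : ℝ) < 4*C)).card : ℕ) : ℝ)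
              + ((((A.filter (fun u => u ∈ S)).card : ℕ) : ℝ)
                + (((A.filter (fun v => 4*C ≤
                  (((A.filter (fun u => G.Adj v u)).card : ℕ) : ℝ))).card : ℕ) : ℝ)) := by
            exact_mod_cast hcardR
          linarith
        exact Finset.mem_union_right _ (Finset.mem_filter.mpr ⟨hAP, hZ⟩)
    -- bound on bad1
    have hdc1 : ∑ A ∈ P, (A.filter (fun u => u ∈ S)).card
        = ∑ v : Fin n, (P.filter (fun A => v ∈ A ∧ v ∈ S)).card :=
      aux_double_count P (fun u _ => u ∈ S)
    have hsum1 : ∑ v : Fin n, (P.filter (fun A => v ∈ A ∧ v ∈ S)).card = S.card * c1 := by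
      have hterm : ∀ v : Fin n, (P.filter (fun A => v ∈ A ∧ v ∈ S)).card
          = if v ∈ S then c1 else 0 := by
        intro v
        by_cases hv : v ∈ S
        · rw [if_pos hv]
          have heq : P.filter (fun A => v ∈ A ∧ v ∈ S) = P.filter (fun A => v ∈ A) := by
            apply Finset.filter_congr
            intro A _
            simp [hv]
          rw [heq, hPdef, hc1]
          rw [aux_card_contain v k hk1n, Fintype.card_fin]
        · rw [if_neg hv]
          rw [Finset.card_eq_zero, Finset.filter_eq_empty_iff]
          intro A _
          rintro ⟨-, hvS⟩
          exact hv hvS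
      rw [Finset.sum_congr rfl (fun v _ => hterm v), Finset.sum_ite_mem, Finset.univ_inter,
        Finset.sum_const, smul_eq_mul]
    have hmark1 := aux_markov P (fun A => (A.filter (fun u => u ∈ S)).card) ((k:ℝ)/3)
    have hsumw1 : ∑ A ∈ P, (((A.filter (fun u => u ∈ S)).card : ℕ) : ℝ)
        = ((S.card * c1 : ℕ) : ℝ) := by
      rw [← Nat.cast_sum, hdc1, hsum1]
    have hbad1card : (bad1.card : ℝ) ≤ (n.choose k : ℝ)/4 := by
      have h1 : ((k:ℝ)/3) * (bad1.card : ℝ) ≤ (S.card : ℝ) * (c1 : ℝ) := by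
        calc ((k:ℝ)/3) * (bad1.card : ℝ)
            ≤ ∑ A ∈ P, (((A.filter (fun u => u ∈ S)).card : ℕ) : ℝ) := hmark1
          _ = ((S.card * c1 : ℕ) : ℝ) := hsumw1
          _ = (S.card : ℝ) * (c1 : ℝ) := by push_cast; ring
      have h2 : (S.card : ℝ) * (c1 : ℝ) ≤ ((n:ℝ)/12) * (c1 : ℝ) :=
        mul_le_mul_of_nonneg_right hS.le (by positivity)
      have h3 : ((n:ℝ)/12) * (c1:ℝ) = ((k:ℝ) * (n.choose k : ℝ))/12 := by
        rw [div_mul_eq_mul_div, hnc1]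
      have h4 : ((k:ℝ)/3) * (bad1.card : ℝ) ≤ ((k:ℝ) * (n.choose k : ℝ))/12 := by
        rw [← h3]; linarith
      have hk3 : (0:ℝ) < (k:ℝ)/3 := by linarith
      rw [← le_div_iff₀' hk3] at h4
      calc (bad1.card : ℝ) ≤ ((k:ℝ) * (n.choose k : ℝ))/12 / ((k:ℝ)/3) := h4
        _ = (n.choose k : ℝ)/4 := by field_simp; ring
    -- bound on bad2
    set β : ℝ := Real.exp (2.004 - 2.27391*C) with hβdef
    have hβ0 : 0 < β := Real.exp_pos _
    have hdc2 : ∑ A ∈ P, (A.filter (fun u => u ∉ S ∧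
          (((A.filter (fun w => G.Adj u w)).card : ℕ) : ℝ) < 4*C)).card
        = ∑ v : Fin n, (P.filter (fun A => v ∈ A ∧ (v ∉ S ∧
          (((A.filter (fun w => G.Adj v w)).card : ℕ) : ℝ) < 4*C))).card :=
      aux_double_count P (fun u A => u ∉ S ∧
        (((A.filter (fun w => G.Adj u w)).card : ℕ) : ℝ) < 4*C)
    have hterm2 : ∀ v : Fin n, ((P.filter (fun A => v ∈ A ∧ (v ∉ S ∧
          (((A.filter (fun w => G.Adj v w)).card : ℕ) : ℝ) < 4*C))).card : ℝ)
        ≤ 2 * β * (c1 : ℝ) := by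
      intro v
      by_cases hv : v ∈ S
      · have hempty : P.filter (fun A => v ∈ A ∧ (v ∉ S ∧
            (((A.filter (fun w => G.Adj v w)).card : ℕ) : ℝ) < 4*C)) = ∅ := by
          rw [Finset.filter_eq_empty_iff]
          intro A _
          rintro ⟨-, hvS, -⟩
          exact hvS hv
        rw [hempty]
        simp only [Finset.card_empty, Nat.cast_zero]
        positivity
      · have hvdeg : 10*C*(n:ℝ)/(k:ℝ) < ((Finset.univ.filter (fun u => G.Adj v u)).card : ℝ) := by
          rw [hSdef, Finset.mem_filter] at hv
          push_neg at hv
          exact hv (Finset.mem_univ v)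
        have hsub2 : P.filter (fun A => v ∈ A ∧ (v ∉ S ∧
              (((A.filter (fun w => G.Adj v w)).card : ℕ) : ℝ) < 4*C))
            ⊆ (Finset.powersetCard k (univ : Finset (Fin n))).filter
              (fun A => v ∈ A ∧ (((A.filter (fun u => G.Adj v u)).card : ℕ) : ℝ) < 4*C) := by
          intro A hA
          rw [hPdef] at hA
          rw [Finset.mem_filter] at hA ⊢
          exact ⟨hA.1, hA.2.1, hA.2.2.2⟩
        have hc2 := Finset.card_le_card hsub2
        calc ((P.filter (fun A => v ∈ A ∧ (v ∉ S ∧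
              (((A.filter (fun w => G.Adj v w)).card : ℕ) : ℝ) < 4*C))).card : ℝ)
            ≤ (((Finset.powersetCard k (univ : Finset (Fin n))).filter
              (fun A => v ∈ A ∧ (((A.filter (fun u => G.Adj v u)).card : ℕ) : ℝ) < 4*C)).card : ℝ) := by
              exact_mod_cast hc2
          _ ≤ 2 * Real.exp (2.004 - 2.27391*C) * ((((n-1).choose (k-1)) : ℕ) : ℝ) :=
              aux_tail G C hC k hk3000 hkC hn hnB v hvdeg
          _ = 2 * β * (c1 : ℝ) := by rw [hβdef, hc1]
    have hmark2 := aux_markov P (fun A => (A.filter (fun u => u ∉ S ∧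
        (((A.filter (fun w => G.Adj u w)).card : ℕ) : ℝ) < 4*C)).card) ((k:ℝ)/6)
    have hsumw2 : ∑ A ∈ P, (((A.filter (fun u => u ∉ S ∧
          (((A.filter (fun w => G.Adj u w)).card : ℕ) : ℝ) < 4*C)).card : ℕ) : ℝ)
        ≤ (n:ℝ) * (2 * β * (c1:ℝ)) := by
      rw [← Nat.cast_sum, hdc2, Nat.cast_sum]
      calc ∑ v : Fin n, ((((P.filter (fun A => v ∈ A ∧ (v ∉ S ∧
            (((A.filter (fun w => G.Adj v w)).card : ℕ) : ℝ) < 4*C))).card : ℕ)) : ℝ)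
          ≤ ∑ _v : Fin n, 2 * β * (c1:ℝ) := Finset.sum_le_sum (fun v _ => hterm2 v)
        _ = (n:ℝ) * (2 * β * (c1:ℝ)) := by
            rw [Finset.sum_const, Finset.card_univ, Fintype.card_fin, nsmul_eq_mul]
    have hbad2card : (bad2.card : ℝ) ≤ 12 * β * (n.choose k : ℝ) := by
      have h1 : ((k:ℝ)/6) * (bad2.card : ℝ) ≤ 2 * β * ((k:ℝ) * (n.choose k : ℝ)) := by
        calc ((k:ℝ)/6) * (bad2.card : ℝ)
            ≤ ∑ A ∈ P, (((A.filter (fun u => u ∉ S ∧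
              (((A.filter (fun w => G.Adj u w)).card : ℕ) : ℝ) < 4*C)).card : ℕ) : ℝ) := hmark2
          _ ≤ (n:ℝ) * (2 * β * (c1:ℝ)) := hsumw2
          _ = 2 * β * ((n:ℝ) * (c1:ℝ)) := by ring
          _ = 2 * β * ((k:ℝ) * (n.choose k : ℝ)) := by rw [hnc1]
      have hk6 : (0:ℝ) < (k:ℝ)/6 := by linarith
      rw [← le_div_iff₀' hk6] at h1
      calc (bad2.card : ℝ) ≤ 2 * β * ((k:ℝ) * (n.choose k : ℝ)) / ((k:ℝ)/6) := h1
        _ = 12 * β * (n.choose k : ℝ) := by field_simp; ring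
    -- numeric bound on β
    have hβle : β ≤ 0.00825 := by
      have h1 : β ≤ Real.exp (-4.81773) := by
        rw [hβdef]
        apply Real.exp_le_exp.mpr
        linarith
      have h5 : (148.413:ℝ) ≤ Real.exp 5 := by
        have ha : (2.7182818:ℝ)^5 ≤ (Real.exp 1)^5 := by
          apply pow_le_pow_left₀ (by norm_num)
          linarith [Real.exp_one_gt_d9]
        have hb : Real.exp (5:ℝ) = (Real.exp 1)^5 := by
          rw [show (5:ℝ) = ((5:ℕ):ℝ) * 1 by norm_num, Real.exp_nat_mul]
        rw [hb]
        calc (148.413:ℝ) ≤ (2.7182818:ℝ)^5 := by norm_num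
          _ ≤ (Real.exp 1)^5 := ha
      have h6 : (0.81773:ℝ) ≤ Real.exp (-0.18227) := by
        linarith [Real.add_one_le_exp (-0.18227:ℝ)]
      have h7 : (121.36:ℝ) ≤ Real.exp 4.81773 := by
        have he : Real.exp (4.81773:ℝ) = Real.exp 5 * Real.exp (-0.18227) := by
          rw [← Real.exp_add]; norm_num
        rw [he]
        calc (121.36:ℝ) ≤ 148.413 * 0.81773 := by norm_num
          _ ≤ Real.exp 5 * Real.exp (-0.18227) := by
              apply mul_le_mul h5 h6 (by norm_num) (le_trans (by norm_num) h5)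
      have h8 : Real.exp (-4.81773) ≤ 0.00825 := by
        rw [Real.exp_neg]
        rw [inv_le_comm₀ (Real.exp_pos _) (by norm_num)]
        linarith
      linarith
    -- final contradiction
    have hchle : (n.choose k : ℝ) ≤ (n:ℝ)^k / (k.factorial : ℝ) := by
      rw [le_div_iff₀ hfacpos, hchoosefac]
      exact_mod_cast Nat.descFactorial_le_pow n k
    have hNN2 : (NN.card : ℝ) ≤ 0.349 * ((n:ℝ)^k / (k.factorial : ℝ)) := by
      have h1 : (NN.card : ℝ) ≤ (bad1.card : ℝ) + (bad2.card : ℝ) := by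
        have ha := Finset.card_le_card hsub
        have h2 := Finset.card_union_le bad1 bad2
        have h3 : NN.card ≤ bad1.card + bad2.card := le_trans ha h2
        exact_mod_cast h3
      have h2 : (NN.card : ℝ) ≤ (1/4 + 12*β) * (n.choose k : ℝ) := by
        rw [add_mul]
        calc (NN.card : ℝ) ≤ (bad1.card : ℝ) + (bad2.card : ℝ) := h1
          _ ≤ (n.choose k : ℝ)/4 + 12 * β * (n.choose k : ℝ) := by linarith
          _ = 1/4 * (n.choose k : ℝ) + 12*β * (n.choose k : ℝ) := by ring
      have h3 : (1/4 + 12*β) ≤ 0.349 := by linarith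
      have h4 : (0:ℝ) ≤ (n.choose k : ℝ) := by positivity
      calc (NN.card : ℝ) ≤ (1/4 + 12*β) * (n.choose k : ℝ) := h2
        _ ≤ 0.349 * (n.choose k : ℝ) := by
            apply mul_le_mul_of_nonneg_right h3 h4
        _ ≤ 0.349 * ((n:ℝ)^k / (k.factorial : ℝ)) := by
            apply mul_le_mul_of_nonneg_left hchle (by norm_num)
    have hNN3 : 0.367879 * ((n:ℝ)^k / (k.factorial : ℝ)) ≤ (NN.card : ℝ) := by
      calc 0.367879 * ((n:ℝ)^k / (k.factorial : ℝ))
          ≤ (Real.exp 1)⁻¹ * ((n:ℝ)^k / (k.factorial : ℝ)) :=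
            mul_le_mul_of_nonneg_right hexpinvge hnkpos.le
        _ = (Real.exp 1)⁻¹ * (n:ℝ)^k / (k.factorial : ℝ) := by ring
        _ ≤ (NN.card : ℝ) := hNN
    nlinarith only [hNN2, hNN3, hnkpos]
end
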